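/- arXiv:2108.05175 — 6 statements merged into one kernel-verified Lean document; each statement's English description precedes it below -/
import Mathlib

section
/- Let G₁ be a finite nilpotent group none of whose Sylow subgroups is cyclic or generalized quaternion, with gcd(|G₁|, 2) = 1, and let Q_{2^k} be the generalized quaternion group of order 2^k (k ≥ 3). Then the set of dominating vertices of the enhanced power graph of G₁ × Q_{2^k} equals {(e, e''), (e, y)}, where e and e'' are the identities of G₁ and Q_{2^k} respectively, and y is the unique element of order 2 in Q_{2^k}. -/
open Subgroup

section Helpers

variable {G : Type*} [Group G]

private lemma mySubgroup_eq_of_le_of_card_le {H K : Subgroup G} [Finite ↥K] (h : H ≤ K)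
    (hc : Nat.card ↥K ≤ Nat.card ↥H) : H = K := by
  have hinj := Subgroup.inclusion_injective h
  have hfin : Finite ↥H := Finite.of_injective _ hinj
  have hcard : Nat.card ↥H = Nat.card ↥K :=
    le_antisymm (Subgroup.card_le_of_le h) hc
  have hbij : Function.Bijective (Subgroup.inclusion h) :=
    (Nat.bijective_iff_injective_and_card _).mpr ⟨hinj, hcard⟩
  refine le_antisymm h fun k hk => ?_
  obtain ⟨⟨x, hx⟩, he⟩ := hbij.2 ⟨k, hk⟩
  have : x = k := congrArg Subtype.val he
  exact this ▸ hx

private lemma zpowers_eq_zpowers_pow_div {w x : G} {p : ℕ} (hp : p.Prime)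
    (hw : orderOf w ≠ 0) (hx : x ∈ zpowers w) (hox : orderOf x = p) :
    zpowers x = zpowers (w ^ (orderOf w / p)) := by
  have hpdvd : p ∣ orderOf w := hox ▸ orderOf_dvd_of_mem_zpowers hx
  have hc : orderOf (w ^ (orderOf w / p)) = p := orderOf_pow_orderOf_div hw hpdvd
  obtain ⟨e, he⟩ := Subgroup.mem_zpowers_iff.mp hx
  set M : ℕ := orderOf w / p with hM
  have hMp : orderOf w = p * M := (Nat.mul_div_cancel' hpdvd).symm
  have hxp1 : w ^ (e * p) = 1 := by
    rw [zpow_mul, he]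
    rw [show ((p : ℤ)) = ((p : ℕ) : ℤ) from rfl, zpow_natCast, ← hox, pow_orderOf_eq_one]
  have hdvd : ((orderOf w : ℕ) : ℤ) ∣ e * p := orderOf_dvd_iff_zpow_eq_one.mpr hxp1
  obtain ⟨s, hs⟩ := hdvd
  have hp0 : (p : ℤ) ≠ 0 := by exact_mod_cast hp.ne_zero
  have he2 : e = (M : ℤ) * s := by
    have h1 : e * p = (M : ℤ) * s * p := by
      rw [hs, hMp]; push_cast; ring
    exact mul_right_cancel₀ hp0 h1
  have hxmem : x ∈ zpowers (w ^ M) := by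
    refine Subgroup.mem_zpowers_iff.mpr ⟨s, ?_⟩
    rw [← he, he2, ← zpow_natCast w M, ← zpow_mul]
  have hfin : Finite ↥(zpowers (w ^ M)) := by
    refine Nat.finite_of_card_ne_zero ?_
    rw [Nat.card_zpowers, hc]
    exact hp.ne_zero
  refine mySubgroup_eq_of_le_of_card_le (Subgroup.zpowers_le.mpr hxmem) ?_
  rw [Nat.card_zpowers, Nat.card_zpowers, hox, hc]

private lemma zpowers_eq_of_common {w x z : G} {p : ℕ} (hp : p.Prime) (hw : orderOf w ≠ 0)
    (hx : x ∈ zpowers w) (hz : z ∈ zpowers w) (hox : orderOf x = p) (hoz : orderOf z = p) :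
    zpowers x = zpowers z := by
  rw [zpowers_eq_zpowers_pow_div hp hw hx hox, zpowers_eq_zpowers_pow_div hp hw hz hoz]

private lemma uniq_transfer {P : Type*} [Group P] {p : ℕ}
    (hU : ∀ x z : P, orderOf x = p → orderOf z = p → zpowers x = zpowers z)
    (H : Subgroup P) :
    ∀ x z : ↥H, orderOf x = p → orderOf z = p → zpowers x = zpowers z := by
  intro x z hx hz
  have h1 : orderOf (x : P) = p := by rw [Subgroup.orderOf_coe, hx]
  have h2 : orderOf (z : P) = p := by rw [Subgroup.orderOf_coe, hz]
  apply Subgroup.map_injective H.subtype_injective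
  rw [MonoidHom.map_zpowers, MonoidHom.map_zpowers]
  exact hU _ _ h1 h2

end Helpers

universe u

private lemma pgroup_orderOf_pow_div {G : Type u} [Group G] {p : ℕ} (hp : p.Prime)
    (hG : IsPGroup p G) {x : G} (hx : x ≠ 1) (h0 : orderOf x ≠ 0) :
    orderOf (x ^ (orderOf x / p)) = p := by
  haveI : Fact p.Prime := ⟨hp⟩
  obtain ⟨s, hs⟩ := IsPGroup.iff_orderOf.mp hG x
  have hs0 : s ≠ 0 := by
    rintro rfl
    exact hx (orderOf_eq_one_iff.mp (by rw [hs, pow_zero]))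
  exact orderOf_pow_orderOf_div h0 (hs ▸ dvd_pow_self p hs0)

private theorem isCyclic_aux (p : ℕ) (hp : p.Prime) (hp2 : p ≠ 2) :
    ∀ n : ℕ, ∀ (P : Type u) [Group P] [Finite P], Nat.card P = n →
      IsPGroup p P →
      (∀ x z : P, orderOf x = p → orderOf z = p → Subgroup.zpowers x = Subgroup.zpowers z) →
      IsCyclic P := by
  intro n
  induction n using Nat.strong_induction_on with
  | _ n IH =>
  intro P _ _ hcard hPG hU
  by_contra hnc
  rcases subsingleton_or_nontrivial P with hs | hnt
  · exact hnc (@isCyclic_of_subsingleton _ _ hs)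
  haveI : Fact p.Prime := ⟨hp⟩
  have hn0 : n ≠ 0 := hcard ▸ Nat.card_pos.ne'
  have hcoa : IsCoatomic (Subgroup P) := isCoatomic_of_orderTop_gt_wellFounded wellFounded_gt
  -- proper subgroups are cyclic
  have hproper : ∀ M : Subgroup P, M ≠ ⊤ → IsCyclic ↥M := by
    intro M hM
    have h1 : Nat.card ↥M * M.index = Nat.card P := M.card_mul_index
    have h2 : M.index ≠ 1 := by simpa [Subgroup.index_eq_one] using hM
    have h3 : 0 < Nat.card ↥M := Nat.card_pos
    have h4 : M.index ≠ 0 := Subgroup.index_ne_zero_of_finite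
    have hlt : Nat.card ↥M < n := by
      rw [← hcard, ← h1]
      have h5 : 2 ≤ M.index := by omega
      nlinarith
    exact IH _ hlt ↥M rfl (hPG.to_subgroup M) (uniq_transfer hU M)
  -- two distinct coatoms
  obtain ⟨x₀', hx₀'⟩ := exists_ne (1 : P)
  have hbot : (⊥ : Subgroup P) ≠ ⊤ := by
    intro h
    have : x₀' ∈ (⊥ : Subgroup P) := h.symm ▸ Subgroup.mem_top x₀'
    exact hx₀' this
  obtain ⟨M₁, hM₁, -⟩ := (hcoa.eq_top_or_exists_le_coatom ⊥).resolve_left hbot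
  obtain ⟨x₀, -, hx₀⟩ := SetLike.exists_of_lt (lt_top_iff_ne_top.mpr hM₁.1)
  have hzx : Subgroup.zpowers x₀ ≠ ⊤ := by
    intro h
    exact hnc ⟨⟨x₀, fun y => (Subgroup.eq_top_iff' _).mp h y⟩⟩
  obtain ⟨M₂, hM₂, hxM₂⟩ := (hcoa.eq_top_or_exists_le_coatom (zpowers x₀)).resolve_left hzx
  have hne : M₁ ≠ M₂ := fun h => hx₀ (h ▸ hxM₂ (Subgroup.mem_zpowers x₀))
  haveI hnil : Group.IsNilpotent P := hPG.isNilpotent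
  have hncond : NormalizerCondition P := normalizerCondition_of_isNilpotent
  haveI hN₁ : M₁.Normal := Subgroup.NormalizerCondition.normal_of_coatom _ hncond hM₁
  haveI hN₂ : M₂.Normal := Subgroup.NormalizerCondition.normal_of_coatom _ hncond hM₂
  -- quotients have order p
  have hquot : ∀ (M : Subgroup P), IsCoatom M → ∀ (_ : M.Normal), Nat.card (P ⧸ M) = p := by
    intro M hM hMn
    have hQp : IsPGroup p (P ⧸ M) := hPG.to_quotient M
    obtain ⟨x, -, hx⟩ := SetLike.exists_of_lt (lt_top_iff_ne_top.mpr hM.1)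
    have hq1 : (QuotientGroup.mk' M x : P ⧸ M) ≠ 1 := by
      simpa [QuotientGroup.eq_one_iff] using hx
    set q : P ⧸ M := QuotientGroup.mk' M x with hqdef
    set t : ℕ := orderOf q / p with ht
    have hob : orderOf (q ^ t) = p :=
      pgroup_orderOf_pow_div hp hQp hq1 (orderOf_pos q).ne'
    set b : P ⧸ M := q ^ t with hb
    have hcomap : M < Subgroup.comap (QuotientGroup.mk' M) (zpowers b) := by
      refine lt_of_le_of_ne ?_ ?_
      · intro m hm
        have : QuotientGroup.mk' M m = 1 := (QuotientGroup.eq_one_iff m).mpr hm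
        simp only [Subgroup.mem_comap, this]
        exact one_mem _
      · intro h
        have hwb : QuotientGroup.mk' M (x ^ t) = b := by
          rw [map_pow]
        have hmem : x ^ t ∈ Subgroup.comap (QuotientGroup.mk' M) (zpowers b) := by
          rw [Subgroup.mem_comap, hwb]
          exact Subgroup.mem_zpowers b
        rw [← h] at hmem
        have hb1 : b = 1 := by
          rw [← hwb]
          exact (QuotientGroup.eq_one_iff _).mpr hmem
        rw [hb1, orderOf_one] at hob
        exact hp.ne_one hob.symm
    have hctop : Subgroup.comap (QuotientGroup.mk' M) (zpowers b) = ⊤ := hM.2 _ hcomap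
    have hzb : Subgroup.zpowers b = ⊤ := by
      rw [eq_top_iff]
      intro r _
      obtain ⟨g, rfl⟩ := QuotientGroup.mk'_surjective M r
      have hg : g ∈ Subgroup.comap (QuotientGroup.mk' M) (zpowers b) := by
        rw [hctop]; trivial
      exact hg
    rw [← Subgroup.card_top (G := P ⧸ M), ← hzb, Nat.card_zpowers, hob]
  have hpowM : ∀ (M : Subgroup P), IsCoatom M → ∀ (_ : M.Normal), ∀ g : P, g ^ p ∈ M := by
    intro M hM hMn g
    have h := hquot M hM hMn
    have h1 : (QuotientGroup.mk' M g) ^ p = 1 := by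
      rw [← h]; exact pow_card_eq_one'
    rw [← map_pow] at h1
    exact (QuotientGroup.eq_one_iff _).mp h1
  have hcomm_mem : ∀ (M : Subgroup P), IsCoatom M → ∀ (_ : M.Normal),
      ∀ x y : P, x⁻¹ * y⁻¹ * x * y ∈ M := by
    intro M hM hMn x y
    have hcardq : Nat.card (P ⧸ M) = p := hquot M hM hMn
    have hcy : IsCyclic (P ⧸ M) := isCyclic_of_prime_card hcardq
    letI : CommGroup (P ⧸ M) := hcy.commGroup
    have h1 : (QuotientGroup.mk' M) (x⁻¹ * y⁻¹ * x * y) = 1 := by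
      rw [map_mul, map_mul, map_mul, map_inv, map_inv]
      set A := (QuotientGroup.mk' M) x
      set B := (QuotientGroup.mk' M) y
      calc A⁻¹ * B⁻¹ * A * B = (A⁻¹ * B⁻¹) * (A * B) := by rw [mul_assoc]
        _ = (A⁻¹ * A) * (B⁻¹ * B) := mul_mul_mul_comm _ _ _ _
        _ = 1 := by rw [inv_mul_cancel, inv_mul_cancel, one_mul]
    exact (QuotientGroup.eq_one_iff _).mp h1
  -- K = M₁ ⊓ M₂ is central
  set K := M₁ ⊓ M₂ with hKdef
  have hcent : ∀ z ∈ K, ∀ g : P, z * g = g * z := by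
    have hsup : M₁ ⊔ M₂ = ⊤ := by
      refine hM₁.2 _ ?_
      refine lt_of_le_of_ne le_sup_left fun h => ?_
      have hle : M₂ ≤ M₁ := h ▸ le_sup_right
      rcases hle.lt_or_eq with hlt | heq
      · exact hM₁.1 (hM₂.2 _ hlt)
      · exact hne heq.symm
    have hMcomm : ∀ (M : Subgroup P), M ≠ ⊤ → ∀ a ∈ M, ∀ b ∈ M, a * b = b * a := by
      intro M hM a ha b hb
      haveI := hproper M hM
      letI : CommGroup ↥M := IsCyclic.commGroup
      have := congrArg Subtype.val (mul_comm (⟨a, ha⟩ : ↥M) ⟨b, hb⟩)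
      simpa using this
    intro z hz g
    have h1 : M₁ ≤ Subgroup.centralizer (K : Set P) := by
      intro m hm
      exact Subgroup.mem_centralizer_iff.mpr fun k hk =>
        hMcomm M₁ hM₁.1 k hk.1 m hm
    have h2 : M₂ ≤ Subgroup.centralizer (K : Set P) := by
      intro m hm
      exact Subgroup.mem_centralizer_iff.mpr fun k hk =>
        hMcomm M₂ hM₂.1 k hk.2 m hm
    have htop : (⊤ : Subgroup P) ≤ Subgroup.centralizer (K : Set P) := by
      rw [← hsup]; exact sup_le h1 h2
    exact Subgroup.mem_centralizer_iff.mp (htop (Subgroup.mem_top g)) z hz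
  have hcomK : ∀ x y : P, x⁻¹ * y⁻¹ * x * y ∈ K := fun x y =>
    Subgroup.mem_inf.mpr ⟨hcomm_mem M₁ hM₁ hN₁ x y, hcomm_mem M₂ hM₂ hN₂ x y⟩
  have hppowK : ∀ g : P, g ^ p ∈ K := fun g =>
    Subgroup.mem_inf.mpr ⟨hpowM M₁ hM₁ hN₁ g, hpowM M₂ hM₂ hN₂ g⟩
  -- commutators have order dividing p
  have hdp : ∀ x y : P, (x⁻¹ * y⁻¹ * x * y) ^ p = 1 := by
    intro x y
    set d := x⁻¹ * y⁻¹ * x * y with hd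
    have hdK : d ∈ K := hcomK x y
    have hxy : x * y = y * x * d := by rw [hd]; group
    have hA : ∀ m : ℕ, x * y ^ m = y ^ m * x * d ^ m := by
      intro m
      induction m with
      | zero => simp
      | succ m ih =>
        have hdc : d ^ m * y = y * d ^ m := hcent _ (pow_mem hdK m) y
        have hdc1 : d * d ^ m = d ^ (m + 1) := by rw [pow_succ']
        calc x * y ^ (m + 1) = (x * y ^ m) * y := by rw [pow_succ, mul_assoc]
          _ = y ^ m * x * d ^ m * y := by rw [ih]
          _ = y ^ m * x * (d ^ m * y) := by rw [mul_assoc]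
          _ = y ^ m * x * (y * d ^ m) := by rw [hdc]
          _ = y ^ m * (x * y) * d ^ m := by rw [mul_assoc, mul_assoc, mul_assoc]
          _ = y ^ m * (y * x * d) * d ^ m := by rw [hxy]
          _ = (y ^ m * y) * x * (d * d ^ m) := by simp only [mul_assoc]
          _ = y ^ (m + 1) * x * d ^ (m + 1) := by rw [← pow_succ, hdc1]
    have hyp : x * y ^ p = y ^ p * x := (hcent _ (hppowK y) x).symm
    have := hA p
    rw [hyp] at this
    exact (mul_eq_left.mp this.symm)
  -- the p-th power map is a homomorphism
  have hmul : ∀ x y : P, (x * y) ^ p = x ^ p * y ^ p := by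
    intro x y
    set c := y⁻¹ * x⁻¹ * y * x with hc
    have hcK : c ∈ K := hcomK y x
    have hcp : c ^ p = 1 := hdp y x
    have hyx : y * x = x * y * c := by rw [hc]; group
    have hA : ∀ m : ℕ, y ^ m * x = x * y ^ m * c ^ m := by
      intro m
      induction m with
      | zero => simp
      | succ m ih =>
        have hcc : c * y ^ m = y ^ m * c := hcent _ hcK (y ^ m)
        have h1 : c * c ^ m = c ^ (m + 1) := (pow_succ' c m).symm
        calc y ^ (m + 1) * x = y * (y ^ m * x) := by rw [pow_succ', mul_assoc]
          _ = y * (x * y ^ m * c ^ m) := by rw [ih]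
          _ = (y * x) * y ^ m * c ^ m := by simp only [mul_assoc]
          _ = (x * y * c) * y ^ m * c ^ m := by rw [hyx]
          _ = x * y * (c * y ^ m) * c ^ m := by simp only [mul_assoc]
          _ = x * y * (y ^ m * c) * c ^ m := by rw [hcc]
          _ = x * (y * y ^ m) * (c * c ^ m) := by simp only [mul_assoc]
          _ = x * y ^ (m + 1) * c ^ (m + 1) := by rw [← pow_succ', h1]
    have hB : ∀ m : ℕ, (x * y) ^ m = x ^ m * y ^ m * c ^ (m.choose 2) := by
      intro m
      induction m with
      | zero => simp
      | succ m ih =>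
        have hcx : c ^ (m.choose 2) * x = x * c ^ (m.choose 2) :=
          hcent _ (pow_mem hcK _) x
        have hcy : c ^ (m.choose 2) * y = y * c ^ (m.choose 2) := hcent _ (pow_mem hcK _) y
        have hcy2 : c ^ m * y = y * c ^ m := hcent _ (pow_mem hcK _) y
        have hch : (m + 1).choose 2 = m + m.choose 2 := by
          have h := Nat.choose_succ_succ m 1
          rwa [Nat.choose_one_right] at h
        calc (x * y) ^ (m + 1) = (x * y) ^ m * (x * y) := pow_succ _ _
          _ = x ^ m * y ^ m * c ^ (m.choose 2) * (x * y) := by rw [ih]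
          _ = x ^ m * (y ^ m * ((c ^ (m.choose 2) * x) * y)) := by simp only [mul_assoc]
          _ = x ^ m * (y ^ m * ((x * c ^ (m.choose 2)) * y)) := by rw [hcx]
          _ = x ^ m * ((y ^ m * x) * (c ^ (m.choose 2) * y)) := by simp only [mul_assoc]
          _ = x ^ m * ((y ^ m * x) * (y * c ^ (m.choose 2))) := by rw [hcy]
          _ = x ^ m * ((x * y ^ m * c ^ m) * (y * c ^ (m.choose 2))) := by rw [hA m]
          _ = (x ^ m * x) * (y ^ m * ((c ^ m * y) * c ^ (m.choose 2))) := by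
              simp only [mul_assoc]
          _ = (x ^ m * x) * (y ^ m * ((y * c ^ m) * c ^ (m.choose 2))) := by rw [hcy2]
          _ = (x ^ m * x) * ((y ^ m * y) * (c ^ m * c ^ (m.choose 2))) := by
              simp only [mul_assoc]
          _ = x ^ (m + 1) * (y ^ (m + 1) * c ^ (m + m.choose 2)) := by
              rw [← pow_succ, ← pow_succ, ← pow_add]
          _ = x ^ (m + 1) * y ^ (m + 1) * c ^ ((m + 1).choose 2) := by
              rw [hch, mul_assoc]
    have h2p : 2 < p := lt_of_le_of_ne hp.two_le (Ne.symm hp2)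
    obtain ⟨t, ht⟩ := hp.dvd_choose_self (by norm_num) h2p
    calc (x * y) ^ p = x ^ p * y ^ p * c ^ (p.choose 2) := hB p
      _ = x ^ p * y ^ p := by rw [ht, pow_mul, hcp, one_pow, mul_one]
  -- conclude by induction using the p-th power homomorphism
  let φ : P →* P := MonoidHom.mk' (fun g => g ^ p) hmul
  obtain ⟨x1, hx1⟩ := exists_ne (1 : P)
  have ho1 : orderOf (x1 ^ (orderOf x1 / p)) = p :=
    pgroup_orderOf_pow_div hp hPG hx1 (orderOf_pos x1).ne'
  set a : P := x1 ^ (orderOf x1 / p) with ha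
  have hker : φ.ker = Subgroup.zpowers a := by
    ext g
    rw [MonoidHom.mem_ker]
    show g ^ p = 1 ↔ _
    constructor
    · intro hg
      rcases eq_or_ne g 1 with rfl | hg1
      · exact one_mem _
      · have horder : orderOf g = p := by
          have hdvd : orderOf g ∣ p := orderOf_dvd_of_pow_eq_one hg
          rcases (Nat.dvd_prime hp).mp hdvd with h | h
          · exact absurd (orderOf_eq_one_iff.mp h) hg1
          · exact h
        exact (hU g a horder ho1) ▸ Subgroup.mem_zpowers g
    · intro hg
      obtain ⟨e, he⟩ := Subgroup.mem_zpowers_iff.mp hg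
      have hap : a ^ p = 1 := ho1 ▸ pow_orderOf_eq_one a
      calc g ^ p = (a ^ e) ^ (p : ℤ) := by rw [he, zpow_natCast]
        _ = (a ^ (p : ℤ)) ^ e := by rw [← zpow_mul, mul_comm, zpow_mul]
        _ = 1 := by rw [zpow_natCast, hap, one_zpow]
  have hkercard : Nat.card φ.ker = p := by rw [hker, Nat.card_zpowers, ho1]
  have hrange : Nat.card φ.range * p = n := by
    have h1 := Subgroup.card_eq_card_quotient_mul_card_subgroup φ.ker
    have h2 : Nat.card (P ⧸ φ.ker) = Nat.card φ.range :=
      Nat.card_congr (QuotientGroup.quotientKerEquivRange φ).toEquiv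
    rw [← hcard, h1, h2, hkercard]
  have hRlt : Nat.card φ.range < n := by
    have hpos : 0 < Nat.card φ.range := Nat.card_pos
    have hp1 : 1 < p := hp.one_lt
    nlinarith [hrange]
  have hRcyc : IsCyclic ↥φ.range :=
    IH _ hRlt ↥φ.range rfl (hPG.to_subgroup φ.range) (uniq_transfer hU φ.range)
  obtain ⟨b, hb⟩ := hRcyc.exists_generator
  have hbord : orderOf b = Nat.card ↥φ.range := by
    have hzt : Subgroup.zpowers b = ⊤ := by
      rw [eq_top_iff]; exact fun r _ => hb r
    rw [← Nat.card_zpowers, hzt, Subgroup.card_top]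
  obtain ⟨w, hw⟩ := b.2
  have hwp : orderOf (w ^ p) = Nat.card ↥φ.range := by
    have hwb : w ^ p = (b : P) := hw
    rw [hwb, Subgroup.orderOf_coe, hbord]
  rcases eq_or_ne w 1 with rfl | hw1
  · have hone : Nat.card ↥φ.range = 1 := by simpa using hwp.symm
    have hnp : n = p := by rw [← hrange, hone, one_mul]
    exact hnc (isCyclic_of_prime_card (p := p) (hcard.trans hnp))
  · obtain ⟨s, hs⟩ := IsPGroup.iff_orderOf.mp hPG w
    have hs0 : s ≠ 0 := by
      rintro rfl
      exact hw1 (orderOf_eq_one_iff.mp (by rw [hs, pow_zero]))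
    have hgcd : Nat.gcd (orderOf w) p = p := by
      rw [hs]; exact Nat.gcd_eq_right (dvd_pow_self p hs0)
    have hop : orderOf (w ^ p) = p ^ s / p := by rw [orderOf_pow, hgcd, hs]
    have hcardR : Nat.card ↥φ.range = p ^ s / p := by rw [← hwp, hop]
    have hn : n = p ^ s := by
      rw [← hrange, hcardR, Nat.div_mul_cancel (dvd_pow_self p hs0)]
    exact hnc (isCyclic_of_orderOf_eq_card w (by rw [hcard, hn, hs]))

section Quat
open QuaternionGroup

private lemma zmod_self_add_self {n : ℕ} [NeZero n] {i : ZMod (2 * n)} (h : i + i = 0) :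
    i = 0 ∨ i = (n : ZMod (2 * n)) := by
  haveI : NeZero (2 * n) := ⟨by have := NeZero.ne n; omega⟩
  have hv : i.val < 2 * n := ZMod.val_lt i
  have hadd : (i + i).val = (i.val + i.val) % (2 * n) := ZMod.val_add i i
  rw [h, ZMod.val_zero] at hadd
  have hdvd : (2 * n) ∣ (i.val + i.val) := Nat.dvd_of_mod_eq_zero hadd.symm
  obtain ⟨c, hc⟩ := hdvd
  have hc1 : c = 0 ∨ c = 1 := by
    rcases Nat.lt_or_ge c 2 with h' | h'
    · omega
    · exfalso; have := NeZero.pos n; nlinarith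
  rcases hc1 with rfl | rfl
  · left
    apply ZMod.val_injective
    rw [ZMod.val_zero]
    omega
  · right
    apply ZMod.val_injective
    have hn0 := NeZero.pos n
    rw [ZMod.val_natCast, Nat.mod_eq_of_lt (by omega : n < 2 * n)]
    omega

private lemma quat_order_two {n : ℕ} [NeZero n] {z : QuaternionGroup n} (hz : orderOf z = 2) :
    z = a (n : ZMod (2 * n)) := by
  have hz2 : z ^ 2 = 1 := by rw [← hz]; exact pow_orderOf_eq_one z
  have hz1 : z ≠ 1 := by
    intro h; rw [h, orderOf_one] at hz; norm_num at hz
  cases z with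
  | a i =>
    have hsq : (a i : QuaternionGroup n) ^ 2 = a (i + i) := by rw [sq, a_mul_a]
    rw [hsq, one_def] at hz2
    have hii : i + i = 0 := by
      have := a.inj hz2
      simpa using this
    rcases zmod_self_add_self hii with h0 | hn'
    · exact absurd (by rw [h0, one_def]) hz1
    · rw [hn']
  | xa i =>
    rw [orderOf_xa] at hz
    norm_num at hz

private lemma quat_central {n : ℕ} [NeZero n] (hn : 2 ≤ n) {z : QuaternionGroup n}
    (hz : ∀ u : QuaternionGroup n, z * u = u * z) :
    z = 1 ∨ z = a (n : ZMod (2 * n)) := by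
  haveI : NeZero (2 * n) := ⟨by have := NeZero.ne n; omega⟩
  cases z with
  | a i =>
    have h := hz (xa 0)
    rw [a_mul_xa, xa_mul_a] at h
    have hii : (0 : ZMod (2 * n)) - i = 0 + i := xa.inj h
    have h2 : i + i = 0 := by
      have hni : -i = i := by rwa [zero_sub, zero_add] at hii
      calc i + i = -i + i := by rw [hni]
        _ = 0 := neg_add_cancel i
    rcases zmod_self_add_self h2 with h0 | hn'
    · left; rw [h0, one_def]
    · right; rw [hn']
  | xa i =>
    exfalso
    have h := hz (a 1)
    rw [xa_mul_a, a_mul_xa] at h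
    have h1 : i + 1 = i - 1 := xa.inj h
    have h2 : ((2 : ℕ) : ZMod (2 * n)) = 0 := by
      push_cast
      linear_combination h1
    have h3 : (2 * n) ∣ 2 := by rwa [ZMod.natCast_eq_zero_iff] at h2
    have := Nat.le_of_dvd (by norm_num) h3
    omega

end Quat


private theorem main_aux (G₁ : Type*) [Group G₁] [Finite G₁]
    (hSyl : ∀ p : ℕ, p.Prime → p ∣ Nat.card G₁ → ∀ P : Sylow p G₁,
      ¬ IsCyclic ↥(P.toSubgroup))
    (hodd : Nat.Coprime (Nat.card G₁) 2)
    (m : ℕ) [NeZero m] (hm2 : 2 ≤ m) (K : ℕ)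
    (hcardQ : Nat.card (QuaternionGroup m) = 2 ^ K)
    (y : QuaternionGroup m) (hy : orderOf y = 2) (v : G₁ × QuaternionGroup m) :
    (∀ u, u ≠ v → u ≠ v ∧ ∃ w : G₁ × QuaternionGroup m,
        v ∈ Subgroup.zpowers w ∧ u ∈ Subgroup.zpowers w) ↔
      (v = ((1 : G₁), (1 : QuaternionGroup m)) ∨ v = ((1 : G₁), y)) := by
  classical
  have hy' : y = QuaternionGroup.a ((m : ℕ) : ZMod (2 * m)) := quat_order_two hy
  have hy2 : y ^ 2 = 1 := by rw [← hy]; exact pow_orderOf_eq_one y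
  have hpowmk : ∀ (a : G₁) (b : QuaternionGroup m) (j : ℕ), (a, b) ^ j = (a ^ j, b ^ j) :=
    fun a b j => rfl
  constructor
  · intro hv
    obtain ⟨g, q⟩ := v
    have hvAdj : ∀ u, u ≠ (g, q) → ∃ w : G₁ × QuaternionGroup m,
        (g, q) ∈ Subgroup.zpowers w ∧ u ∈ Subgroup.zpowers w :=
      fun u hu => (hv u hu).2
    -- q is central
    have hqc : ∀ u₂ : QuaternionGroup m, q * u₂ = u₂ * q := by
      intro u₂
      rcases eq_or_ne u₂ q with rfl | hne
      · rfl
      · obtain ⟨⟨w₁, w₂⟩, hw1, hw2⟩ := hvAdj (g, u₂) (by simp [Prod.ext_iff, hne])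
        obtain ⟨i, hi⟩ := Subgroup.mem_zpowers_iff.mp hw1
        obtain ⟨j, hj⟩ := Subgroup.mem_zpowers_iff.mp hw2
        have hq2 : w₂ ^ i = q := congrArg Prod.snd hi
        have hu2 : w₂ ^ j = u₂ := congrArg Prod.snd hj
        rw [← hq2, ← hu2]
        exact zpow_mul_comm w₂ i j
    -- g = 1
    have hg1 : g = 1 := by
      by_contra hg
      have hog : orderOf g ≠ 1 := fun h => hg (orderOf_eq_one_iff.mp h)
      set p := (orderOf g).minFac with hpdef
      have hp : p.Prime := Nat.minFac_prime hog
      have hpdvd : p ∣ orderOf g := Nat.minFac_dvd _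
      have hpcard : p ∣ Nat.card G₁ := hpdvd.trans (orderOf_dvd_natCard g)
      have hp2 : p ≠ 2 := by
        intro hp2e
        rw [hp2e] at hpcard
        exact absurd ((Nat.coprime_comm.mp hodd).eq_one_of_dvd hpcard) (by norm_num)
      have hgo0 : orderOf g ≠ 0 := (orderOf_pos g).ne'
      set a₀ := g ^ (orderOf g / p) with ha₀
      have hoa₀ : orderOf a₀ = p := orderOf_pow_orderOf_div hgo0 hpdvd
      have hcommon : ∀ x : G₁, orderOf x = p →
          Subgroup.zpowers x = Subgroup.zpowers a₀ := by
        intro x hx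
        have hkey : ∃ w₁ : G₁, x ∈ Subgroup.zpowers w₁ ∧ g ∈ Subgroup.zpowers w₁ := by
          rcases eq_or_ne ((x, (1 : QuaternionGroup m))) ((g, q)) with heq | hne
          · have h1 : x = g := congrArg Prod.fst heq
            exact ⟨g, h1 ▸ Subgroup.mem_zpowers g, Subgroup.mem_zpowers g⟩
          · obtain ⟨⟨w₁, w₂⟩, hw1, hw2⟩ := hvAdj (x, 1) hne
            obtain ⟨i, hi⟩ := Subgroup.mem_zpowers_iff.mp hw1
            obtain ⟨j, hj⟩ := Subgroup.mem_zpowers_iff.mp hw2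
            exact ⟨w₁, ⟨j, congrArg Prod.fst hj⟩, ⟨i, congrArg Prod.fst hi⟩⟩
        obtain ⟨w₁, hxw, hgw⟩ := hkey
        have ha₀w : a₀ ∈ Subgroup.zpowers w₁ := by
          rw [ha₀]; exact pow_mem hgw _
        exact zpowers_eq_of_common hp (orderOf_pos w₁).ne' hxw ha₀w hx hoa₀
      have hU : ∀ x z : G₁, orderOf x = p → orderOf z = p →
          Subgroup.zpowers x = Subgroup.zpowers z := fun x z hx hz => by
        rw [hcommon x hx, hcommon z hz]
      haveI : Fact p.Prime := ⟨hp⟩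
      obtain ⟨P⟩ : Nonempty (Sylow p G₁) := inferInstance
      exact (hSyl p hp hpcard P) (isCyclic_aux p hp hp2 (Nat.card ↥P.toSubgroup)
        ↥P.toSubgroup rfl P.2 (uniq_transfer hU P.toSubgroup))
    rcases quat_central hm2 hqc with h1 | h2
    · left; rw [hg1, h1]
    · right; rw [hg1, h2, hy']
  · intro hv u hu
    refine ⟨hu, ?_⟩
    rcases hv with rfl | rfl
    · exact ⟨u, one_mem _, Subgroup.mem_zpowers u⟩
    · obtain ⟨g', q'⟩ := u
      have hd : orderOf g' ∣ Nat.card G₁ := orderOf_dvd_natCard g'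
      have hdodd : Nat.Coprime (orderOf g') 2 := Nat.Coprime.coprime_dvd_left hd hodd
      have hd2 : ¬ 2 ∣ orderOf g' := by
        intro h2
        have h3 := Nat.dvd_gcd h2 (dvd_refl 2)
        rw [Nat.Coprime] at hdodd
        rw [hdodd] at h3
        norm_num at h3
      have hd0 : orderOf g' ≠ 0 := (orderOf_pos g').ne'
      have hdmod : orderOf g' % 2 = 1 := by
        rcases Nat.mod_two_eq_zero_or_one (orderOf g') with h | h
        · exact absurd (Nat.dvd_of_mod_eq_zero h) hd2
        · exact h
      rcases eq_or_ne q' 1 with rfl | hq1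
      · refine ⟨(g', y), ?_, ?_⟩
        · refine Subgroup.mem_zpowers_iff.mpr ⟨((orderOf g' : ℕ) : ℤ), ?_⟩
          rw [zpow_natCast, hpowmk, pow_orderOf_eq_one]
          have hyd : y ^ (orderOf g') = y := by
            obtain ⟨t, ht⟩ : ∃ t, orderOf g' = 2 * t + 1 := ⟨orderOf g' / 2, by omega⟩
            rw [ht, pow_succ, pow_mul, hy2, one_pow, one_mul]
          rw [hyd]
        · refine Subgroup.mem_zpowers_iff.mpr ⟨((orderOf g' + 1 : ℕ) : ℤ), ?_⟩
          rw [zpow_natCast, hpowmk]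
          have h1 : g' ^ (orderOf g' + 1) = g' := by
            rw [pow_succ, pow_orderOf_eq_one, one_mul]
          have h2 : y ^ (orderOf g' + 1) = 1 := by
            obtain ⟨t, ht⟩ : ∃ t, orderOf g' + 1 = 2 * t := ⟨(orderOf g' + 1) / 2, by omega⟩
            rw [ht, pow_mul, hy2, one_pow]
          rw [h1, h2]
      · refine ⟨(g', q'), ?_, Subgroup.mem_zpowers _⟩
        set t := orderOf q' with htdef
        have ht0 : t ≠ 0 := (orderOf_pos q').ne'
        have htd : t ∣ 2 ^ K := by rw [htdef, ← hcardQ]; exact orderOf_dvd_natCard q'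
        obtain ⟨j, hjk, hj⟩ := (Nat.dvd_prime_pow Nat.prime_two).mp htd
        have hj0 : j ≠ 0 := by
          rintro rfl
          rw [pow_zero] at hj
          exact hq1 (orderOf_eq_one_iff.mp hj)
        have h2t : 2 ∣ t := hj ▸ dvd_pow_self 2 hj0
        have hoz : orderOf (q' ^ (t / 2)) = 2 := orderOf_pow_orderOf_div ht0 h2t
        have hzy : q' ^ (t / 2) = y := by rw [quat_order_two hoz, ← hy']
        have hcop : Nat.Coprime (orderOf g') t := by
          rw [hj]; exact Nat.Coprime.pow_right _ hdodd
        obtain ⟨r, hr1, hr2⟩ := Nat.chineseRemainder hcop 0 (t / 2)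
        refine Subgroup.mem_zpowers_iff.mpr ⟨((r : ℕ) : ℤ), ?_⟩
        rw [zpow_natCast, hpowmk]
        have hgr : g' ^ r = 1 := by
          have h := (pow_eq_pow_iff_modEq (x := g')).mpr hr1
          rwa [pow_zero] at h
        have hqr : q' ^ r = y := by
          have h := (pow_eq_pow_iff_modEq (x := q')).mpr hr2
          rwa [hzy] at h
        rw [hgr, hqr]

/-- The enhanced power graph of a group `G`: distinct `x, y` are adjacent iff both lie in a
common cyclic subgroup `⟨w⟩`. -/
def enhancedPowerGraph (G : Type*) [Group G] : SimpleGraph G where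
  Adj x y := x ≠ y ∧ ∃ w : G, x ∈ Subgroup.zpowers w ∧ y ∈ Subgroup.zpowers w
  symm := ⟨fun x y ⟨hxy, w, hx, hy⟩ => ⟨hxy.symm, w, hy, hx⟩⟩
  loopless := ⟨fun x ⟨hxx, _⟩ => hxx rfl⟩

/-- The set of dominating vertices of a graph: vertices adjacent to every other vertex. -/
def dominatingVertices {V : Type*} (Γ : SimpleGraph V) : Set V :=
  {v | ∀ u, u ≠ v → Γ.Adj v u}

/-- The proper enhanced power graph: the induced subgraph of the enhanced power graph on the
set of non-dominating vertices. -/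
def properEnhancedPowerGraph (G : Type*) [Group G] :
    SimpleGraph {v : G | v ∉ dominatingVertices (enhancedPowerGraph G)} :=
  (enhancedPowerGraph G).induce {v : G | v ∉ dominatingVertices (enhancedPowerGraph G)}

/-- A group is generalized quaternion if it is isomorphic to the generalized quaternion
(dicyclic) group of order `2 ^ k` for some `k ≥ 3`.  (`QuaternionGroup m` has order `4 * m`.) -/
def IsGeneralizedQuaternion (G : Type*) [Group G] : Prop :=
  ∃ k : ℕ, 3 ≤ k ∧ Nonempty (G ≃* QuaternionGroup (2 ^ (k - 2)))

/-- No Sylow subgroup (for a prime dividing the order of the group) is cyclic or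
generalized quaternion. -/
def NoCyclicOrGenQuaternionSylow (G : Type*) [Group G] : Prop :=
  ∀ p : ℕ, p.Prime → p ∣ Nat.card G → ∀ P : Sylow p G,
    ¬ IsCyclic ↥(P.toSubgroup) ∧ ¬ IsGeneralizedQuaternion ↥(P.toSubgroup)

/-- The domination number of a graph: the least cardinality of a dominating set. -/
noncomputable def dominationNumber {V : Type*} (Γ : SimpleGraph V) : ℕ :=
  sInf (Set.ncard '' {s : Set V | ∀ v ∉ s, ∃ u ∈ s, Γ.Adj u v})

/-- The vertex connectivity of a graph: the least number of vertices whose removal leaves a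
graph that is not connected. -/
noncomputable def vertexConnectivity {V : Type*} (Γ : SimpleGraph V) : ℕ :=
  sInf {n | ∃ s : Set V, s.ncard = n ∧ ¬ (Γ.induce sᶜ).Connected}

/-- The number of subgroups of `G` of order `m`. -/
noncomputable def numSubgroupsOfOrder (G : Type*) [Group G] (m : ℕ) : ℕ :=
  Nat.card {H : Subgroup G // Nat.card ↥H = m}

theorem dominatingVertices_enhancedPowerGraph_mul_quaternion
    (G₁ : Type*) [Group G₁] [Finite G₁] [Group.IsNilpotent G₁]
    (hSyl : NoCyclicOrGenQuaternionSylow G₁)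
    (hodd : Nat.Coprime (Nat.card G₁) 2)
    (k : ℕ) (hk : 3 ≤ k)
    (y : QuaternionGroup (2 ^ (k - 2))) (hy : orderOf y = 2) :
    dominatingVertices (enhancedPowerGraph (G₁ × QuaternionGroup (2 ^ (k - 2)))) =
      {((1 : G₁), (1 : QuaternionGroup (2 ^ (k - 2)))), ((1 : G₁), y)} := by
  have hm2 : 2 ≤ 2 ^ (k - 2) := by
    calc 2 = 2 ^ 1 := (pow_one 2).symm
      _ ≤ 2 ^ (k - 2) := Nat.pow_le_pow_right (by norm_num) (by omega)
  haveI : NeZero (2 ^ (k - 2)) := ⟨by positivity⟩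
  have hcardQ : Nat.card (QuaternionGroup (2 ^ (k - 2))) = 2 ^ k := by
    rw [Nat.card_eq_fintype_card, QuaternionGroup.card,
      show (4 : ℕ) = 2 ^ 2 by norm_num, ← pow_add]
    congr 1
    omega
  ext v
  simp only [Set.mem_insert_iff, Set.mem_singleton_iff]
  have := main_aux G₁ (fun p hp hd P => (hSyl p hp hd P).1) hodd
    (2 ^ (k - 2)) hm2 k hcardQ y hy v
  rw [← this]
  constructor
  · intro hv u hu
    exact ⟨hu, (show _ ∧ _ from hv u hu).2⟩
  · intro hv u hu
    exact (show v ≠ u ∧ _ from ⟨Ne.symm hu, (hv u hu).2⟩)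
end

section
/- Let G₁ be a finite nilpotent group none of whose Sylow subgroups is cyclic or generalized quaternion, let n be a positive integer, and let Q_{2^k} be the generalized quaternion group of order 2^k (k ≥ 3). Assume gcd(|G₁|, n) = gcd(|G₁|, 2) = gcd(n, 2) = 1. Then the set of dominating vertices of the enhanced power graph of G₁ × ℤ_n × Q_{2^k} equals {(e, x, e'') : x ∈ ℤ_n} ∪ {(e, x, y) : x ∈ ℤ_n}, where e and e'' are the identities of G₁ and Q_{2^k} respectively and y is the unique element of order 2 in Q_{2^k}. -/
section EnhancedPowerGraphAux
open Subgroup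

-- gcd helper
private lemma gcd_eq_div {N s p : ℕ} (hNpos : 0 < N) (h1 : N / Nat.gcd N s = p)
    (hp : 0 < p) : Nat.gcd N s = N / p ∧ p ∣ N := by
  have hc : N = N.gcd s * p := Nat.eq_mul_of_div_eq_right (Nat.gcd_dvd_left N s) h1
  constructor
  · have h2 : N.gcd s * p / p = N.gcd s := Nat.mul_div_cancel _ hp
    rw [← hc] at h2
    exact h2.symm
  · exact ⟨N.gcd s, hc.trans (mul_comm _ _)⟩

-- L1
lemma cyc_mem_of_prime_dvd {H : Type*} [Group H] [Finite H] {p : ℕ} (hp : p.Prime)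
    {w z u : H} (hz : z ∈ zpowers w) (hu : u ∈ zpowers w)
    (hzo : orderOf z = p) (hdvd : p ∣ orderOf u) : z ∈ zpowers u := by
  have hNu : orderOf u ≠ 0 := (orderOf_pos u).ne'
  set u' : H := u ^ (orderOf u / p) with hu'def
  have hu'o : orderOf u' = p := orderOf_pow_orderOf_div hNu hdvd
  have hu'w : u' ∈ zpowers w := Subgroup.pow_mem _ hu _
  suffices h : z ∈ zpowers u' by
    exact zpowers_le.mpr (Subgroup.pow_mem _ (mem_zpowers u) _) h
  set N := orderOf w with hN
  have hNpos : 0 < N := orderOf_pos w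
  obtain ⟨s, rfl⟩ := mem_powers_iff_mem_zpowers.mpr hz
  obtain ⟨t, ht⟩ := mem_powers_iff_mem_zpowers.mpr hu'w
  simp only at hzo ht ⊢
  obtain ⟨hgs, hpN⟩ := gcd_eq_div hNpos ((orderOf_pow w).symm.trans hzo) hp.pos
  obtain ⟨hgt, -⟩ := gcd_eq_div hNpos ((orderOf_pow w).symm.trans (ht ▸ hu'o)) hp.pos
  -- both powers lie in zpowers (w ^ (N / p)), a subgroup of order p
  have hdvds : N / p ∣ s := hgs ▸ Nat.gcd_dvd_right N s
  have hdvdt : N / p ∣ t := hgt ▸ Nat.gcd_dvd_right N t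
  have hmem : ∀ {r : ℕ}, N / p ∣ r → w ^ r ∈ zpowers (w ^ (N / p)) := by
    rintro r ⟨c, rfl⟩
    rw [pow_mul]
    exact Subgroup.pow_mem _ (Subgroup.mem_zpowers _) c
  have hzmem := hmem hdvds
  have hord : orderOf (w ^ (N / p)) = p := by
    rw [orderOf_pow, ← hN, Nat.gcd_eq_right (Nat.div_dvd_of_dvd hpN),
      Nat.div_div_self hpN hNpos.ne']
  have hle : zpowers u' ≤ zpowers (w ^ (N / p)) := zpowers_le.mpr (ht ▸ hmem hdvdt)
  have heq : zpowers u' = zpowers (w ^ (N / p)) := by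
    apply Subgroup.eq_of_le_of_card_ge hle
    rw [Nat.card_zpowers, Nat.card_zpowers, hord, hu'o]
  rw [heq]; exact hzmem

section Class2
variable {P : Type*} [Group P] {x y e : P}

private lemma central_swap_pow (h : y * x = x * y * e) (he : ∀ g : P, Commute e g) (n : ℕ) :
    y ^ n * x = x * y ^ n * e ^ n := by
  induction n with
  | zero => simp
  | succ n ih =>
    calc y ^ (n + 1) * x = y * (y ^ n * x) := by rw [pow_succ']; group
    _ = y * (x * y ^ n * e ^ n) := by rw [ih]
    _ = (y * x) * (y ^ n * e ^ n) := by group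
    _ = (x * y * e) * (y ^ n * e ^ n) := by rw [h]
    _ = x * y * ((e * y ^ n) * e ^ n) := by group
    _ = x * y * ((y ^ n * e) * e ^ n) := by rw [(he (y ^ n)).eq]
    _ = x * y ^ (n + 1) * e ^ (n + 1) := by rw [pow_succ' y, pow_succ' e]; group

private lemma central_mul_pow (h : y * x = x * y * e) (he : ∀ g : P, Commute e g) (n : ℕ) :
    (x * y) ^ n = x ^ n * y ^ n * e ^ (n.choose 2) := by
  induction n with
  | zero => simp
  | succ n ih =>
    have hc : (n + 1).choose 2 = n.choose 2 + n := by
      rw [Nat.choose_succ_succ, Nat.choose_one_right, Nat.add_comm]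
    calc (x * y) ^ (n + 1) = (x * y) ^ n * (x * y) := pow_succ _ _
    _ = x ^ n * y ^ n * e ^ (n.choose 2) * (x * y) := by rw [ih]
    _ = x ^ n * y ^ n * (e ^ (n.choose 2) * x) * y := by group
    _ = x ^ n * y ^ n * (x * e ^ (n.choose 2)) * y := by rw [(he x).pow_left _ |>.eq]
    _ = x ^ n * (y ^ n * x) * (e ^ (n.choose 2) * y) := by group
    _ = x ^ n * (x * y ^ n * e ^ n) * (y * e ^ (n.choose 2)) := by
        rw [central_swap_pow h he n, ((he y).pow_left _).eq]
    _ = x ^ (n + 1) * y ^ n * (e ^ n * y) * e ^ (n.choose 2) := by rw [pow_succ' x]; group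
    _ = x ^ (n + 1) * y ^ n * (y * e ^ n) * e ^ (n.choose 2) := by rw [((he y).pow_left _).eq]
    _ = x ^ (n + 1) * y ^ (n + 1) * e ^ ((n + 1).choose 2) := by
        rw [hc, pow_add, pow_succ' y]; group

end Class2

open QuotientGroup in
private lemma pow_p_mem_coatom {P : Type*} [Group P] [Finite P] {p : ℕ} [hpf : Fact p.Prime]
    (hP : IsPGroup p P) {M : Subgroup P} (hM : IsCoatom M) [M.Normal] (x : P) : x ^ p ∈ M := by
  have hQ : IsPGroup p (P ⧸ M) := hP.to_quotient M
  obtain ⟨g, hg⟩ : ∃ g, g ∉ M := by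
    by_contra h
    push_neg at h
    exact hM.1 (Subgroup.eq_top_iff' M |>.mpr h)
  have hQnt : Nontrivial (P ⧸ M) :=
    ⟨⟨(g : P ⧸ M), 1, by simpa [QuotientGroup.eq_one_iff] using hg⟩⟩
  obtain ⟨nq, hnq⟩ := IsPGroup.iff_card.mp hQ
  have hnq0 : nq ≠ 0 := by
    rintro rfl
    rw [pow_zero] at hnq
    exact (Finite.one_lt_card (α := P ⧸ M)).ne' hnq
  obtain ⟨q, hq⟩ := exists_prime_orderOf_dvd_card' p (hnq ▸ dvd_pow_self p hnq0)
  have hqtop : Subgroup.zpowers q = ⊤ := by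
    by_contra hne
    set K := Subgroup.comap (QuotientGroup.mk' M) (Subgroup.zpowers q) with hK
    have hMK : M ≤ K := by
      rw [hK]
      exact le_trans (le_of_eq (QuotientGroup.ker_mk' M).symm) (Subgroup.ker_le_comap _ _)
    have hKtop : K ≠ ⊤ := by
      intro h
      apply hne
      rw [← Subgroup.map_comap_eq_self_of_surjective (QuotientGroup.mk'_surjective M)
        (Subgroup.zpowers q), ← hK, h, Subgroup.map_top_of_surjective _
        (QuotientGroup.mk'_surjective M)]
    have hMneK : M ≠ K := by
      obtain ⟨g', hg'⟩ := QuotientGroup.mk'_surjective M q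
      intro h
      have hg'K : g' ∈ K := by
        rw [hK, Subgroup.mem_comap, hg']
        exact Subgroup.mem_zpowers q
      rw [← h] at hg'K
      have : q = 1 := by rw [← hg', QuotientGroup.mk'_apply, QuotientGroup.eq_one_iff]; exact hg'K
      rw [this, orderOf_one] at hq
      exact hpf.out.one_lt.ne' hq.symm
    exact hKtop (hM.2 K (lt_of_le_of_ne hMK hMneK))
  have hcardQ : Nat.card (P ⧸ M) = p := by
    rw [← Subgroup.card_top, ← hqtop, Nat.card_zpowers, hq]
  have : ((x : P ⧸ M)) ^ p = 1 := by rw [← hcardQ]; exact pow_card_eq_one'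
  rwa [← QuotientGroup.mk_pow, QuotientGroup.eq_one_iff] at this

private lemma commute_of_mem_zpowers {P : Type*} [Group P] {w x y : P}
    (hx : x ∈ Subgroup.zpowers w) (hy : y ∈ Subgroup.zpowers w) : Commute x y := by
  obtain ⟨i, rfl⟩ := Subgroup.mem_zpowers_iff.mp hx
  obtain ⟨j, rfl⟩ := Subgroup.mem_zpowers_iff.mp hy
  exact (Commute.refl w).zpow_zpow i j

private lemma card_lt_of_ne_top {P : Type*} [Group P] [Finite P] {M : Subgroup P} (h : M ≠ ⊤) :
    Nat.card M < Nat.card P := by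
  have hle : Nat.card M ≤ Nat.card P :=
    (Subgroup.card_le_of_le le_top).trans_eq Subgroup.card_top
  rcases lt_or_eq_of_le hle with h1 | h1
  · exact h1
  · exact absurd (Subgroup.eq_top_of_card_eq M h1) h

private lemma exists_zpowers_eq {P : Type*} [Group P] (M : Subgroup P) (h : IsCyclic M) :
    ∃ a : P, a ∈ M ∧ Subgroup.zpowers a = M := by
  obtain ⟨a₀, ha₀⟩ := h.exists_generator
  refine ⟨(a₀ : P), a₀.2, le_antisymm (Subgroup.zpowers_le.mpr a₀.2) ?_⟩
  intro m hm
  obtain ⟨k, hk⟩ := Subgroup.mem_zpowers_iff.mp (ha₀ ⟨m, hm⟩)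
  exact Subgroup.mem_zpowers_iff.mpr ⟨k, by
    have := congrArg (Subgroup.subtype M) hk
    simpa using this⟩

private lemma dom_to_subgroup {P : Type*} [Group P] {M : Subgroup P} {z : P} (hz : z ∈ M)
    (hdom : ∀ u : P, u ≠ 1 → z ∈ Subgroup.zpowers u) (u' : M) (hu' : u' ≠ 1) :
    (⟨z, hz⟩ : M) ∈ Subgroup.zpowers u' := by
  have h1 : (u' : P) ≠ 1 := fun h => hu' (Subtype.ext h)
  obtain ⟨k, hk⟩ := Subgroup.mem_zpowers_iff.mp (hdom u' h1)
  exact Subgroup.mem_zpowers_iff.mpr ⟨k, Subtype.ext (by simpa using hk)⟩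

universe u

private lemma pgroup_isCyclic_of_unique_min :
    ∀ (N : ℕ) (P : Type u) (_ : Group P) (_ : Finite P), Nat.card P ≤ N →
    ∀ (p : ℕ), p.Prime → p ≠ 2 → IsPGroup p P →
    ∀ z : P, orderOf z = p → (∀ u : P, u ≠ 1 → z ∈ Subgroup.zpowers u) → IsCyclic P := by
  intro N
  induction N with
  | zero =>
    intro P _ _ hcard
    exact absurd hcard (by have := Nat.card_pos (α := P); omega)
  | succ N IH =>
    intro P _ _ hcard p hp hp2 hP z hz hdom
    by_contra hnc
    haveI : Fact p.Prime := ⟨hp⟩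
    have hz1 : z ≠ 1 := by
      rintro rfl
      rw [orderOf_one] at hz
      exact hp.one_lt.ne' hz.symm
    have hgen : ∀ g : P, Subgroup.zpowers g ≠ ⊤ := by
      intro g hg
      refine hnc ⟨⟨g, fun x => ?_⟩⟩
      have hx : x ∈ (⊤ : Subgroup P) := trivial
      rwa [← hg] at hx
    -- two distinct coatoms
    obtain ⟨M₁, hM₁, hzM₁⟩ :=
      (eq_top_or_exists_le_coatom (Subgroup.zpowers z)).resolve_left (hgen z)
    obtain ⟨g, hg⟩ : ∃ g : P, g ∉ M₁ := by
      by_contra h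
      push_neg at h
      exact hM₁.1 ((Subgroup.eq_top_iff' M₁).mpr h)
    obtain ⟨M₂, hM₂, hgM₂⟩ :=
      (eq_top_or_exists_le_coatom (Subgroup.zpowers g)).resolve_left (hgen g)
    have hne : M₁ ≠ M₂ := fun h => hg (h ▸ hgM₂ (Subgroup.mem_zpowers g))
    have hle_eq : ∀ {A B : Subgroup P}, IsCoatom A → IsCoatom B → A ≤ B → A = B := by
      intro A B hA hB hAB
      rcases lt_or_eq_of_le hAB with h | h
      · exact absurd (hA.2 _ h) hB.1
      · exact h
    -- normality
    haveI : Group.IsNilpotent P := hP.isNilpotent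
    haveI hn₁ : M₁.Normal :=
      NormalizerCondition.normal_of_coatom M₁ (normalizerCondition_of_isNilpotent (G := P)) hM₁
    haveI hn₂ : M₂.Normal :=
      NormalizerCondition.normal_of_coatom M₂ (normalizerCondition_of_isNilpotent (G := P)) hM₂
    -- proper subgroups are cyclic
    have hcyc : ∀ M : Subgroup P, M ≠ ⊤ → IsCyclic M := by
      intro M hMne
      rcases eq_or_ne M ⊥ with rfl | hMbot
      · exact isCyclic_of_subsingleton
      · obtain ⟨u, huM, hu1⟩ := (Subgroup.nontrivial_iff_exists_ne_one M).mp
          (M.bot_or_nontrivial.resolve_left hMbot)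
        have hzM : z ∈ M := (Subgroup.zpowers_le.mpr huM) (hdom u hu1)
        exact IH (↥M) inferInstance inferInstance (by have := card_lt_of_ne_top hMne; omega) p hp hp2
          (hP.to_subgroup M) ⟨z, hzM⟩ (by rw [Subgroup.orderOf_mk]; exact hz)
          (dom_to_subgroup hzM hdom)
    obtain ⟨a, haM, haeq⟩ := exists_zpowers_eq M₁ (hcyc M₁ hM₁.1)
    obtain ⟨b, hbM, hbeq⟩ := exists_zpowers_eq M₂ (hcyc M₂ hM₂.1)
    -- M₁ ⊔ M₂ = ⊤ and the intersection is central
    have hsup : M₁ ⊔ M₂ = ⊤ := by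
      have h1 : M₁ ≠ M₁ ⊔ M₂ := by
        intro h
        exact hne (hle_eq hM₂ hM₁ (le_sup_right.trans_eq h.symm)).symm
      exact hM₁.2 _ (lt_of_le_of_ne le_sup_left h1)
    have hcent : ∀ d ∈ M₁ ⊓ M₂, ∀ g : P, Commute d g := by
      intro d hd g
      have hC : M₁ ⊔ M₂ ≤ Subgroup.centralizer {d} := by
        apply sup_le
        · intro m hm
          rw [Subgroup.mem_centralizer_iff]
          rintro s rfl
          exact (commute_of_mem_zpowers (x := m) (y := s) (by rw [haeq]; exact hm)
            (by rw [haeq]; exact hd.1)).symm.eq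
        · intro m hm
          rw [Subgroup.mem_centralizer_iff]
          rintro s rfl
          exact (commute_of_mem_zpowers (x := m) (y := s) (by rw [hbeq]; exact hm)
            (by rw [hbeq]; exact hd.2)).symm.eq
      have hgC : g ∈ Subgroup.centralizer {d} := hC (by rw [hsup]; trivial)
      have h2 := Subgroup.mem_centralizer_iff.mp hgC d (Set.mem_singleton d)
      first
      | exact h2
      | exact h2.symm
    -- b ^ p = a ^ (p * s)
    have hbp : b ^ p ∈ Subgroup.zpowers a := by rw [haeq]; exact pow_p_mem_coatom hP hM₁ b
    obtain ⟨m, hm⟩ := mem_powers_iff_mem_zpowers.mpr hbp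
    simp only at hm
    have hpm : p ∣ m := by
      by_contra hpm
      obtain ⟨ka, hka⟩ := IsPGroup.iff_orderOf.mp hP a
      have ha1 : a ≠ 1 := by
        rintro rfl
        rw [Subgroup.zpowers_one_eq_bot] at haeq
        have : z ∈ (⊥ : Subgroup P) := haeq ▸ hzM₁ (Subgroup.mem_zpowers z)
        exact hz1 (Subgroup.mem_bot.mp this)
      have hco : Nat.Coprime m (orderOf a) := by
        rw [hka]
        exact (Nat.Coprime.pow_right ka ((hp.coprime_iff_not_dvd.mpr hpm)).symm)
      have hlt : 1 < orderOf a := by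
        have h1 : orderOf a ≠ 1 := fun h => ha1 (orderOf_eq_one_iff.mp h)
        have := orderOf_pos a
        omega
      obtain ⟨c, -, hc⟩ := Nat.exists_mul_mod_eq_one_of_coprime hco hlt
      have hmem : a ∈ Subgroup.zpowers (b ^ p) := by
        rw [← hm]
        refine mem_powers_iff_mem_zpowers.mp ⟨c, ?_⟩
        calc (a ^ m) ^ c = a ^ (m * c) := (pow_mul a m c).symm
        _ = a ^ (m * c % orderOf a) := (pow_mod_orderOf a _).symm
        _ = a := by rw [hc, pow_one]
      have haM₂ : a ∈ M₂ := (Subgroup.zpowers_le.mpr (M₂.pow_mem hbM p)) hmem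
      exact hne (hle_eq hM₁ hM₂ (haeq ▸ Subgroup.zpowers_le.mpr haM₂))
    obtain ⟨s, rfl⟩ := hpm
    -- construct the extra element of order p
    set xx := (a ^ s)⁻¹ with hxxdef
    have hxxM₁ : xx ∈ M₁ := M₁.inv_mem (M₁.pow_mem haM s)
    set e := b⁻¹ * xx⁻¹ * b * xx with hedef
    have hrel : b * xx = xx * b * e := by rw [hedef]; group
    have heM₁ : e ∈ M₁ := by
      have h1 : b⁻¹ * xx⁻¹ * b ∈ M₁ := by
        simpa using hn₁.conj_mem xx⁻¹ (M₁.inv_mem hxxM₁) b⁻¹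
      exact M₁.mul_mem h1 hxxM₁
    have heM₂ : e ∈ M₂ := by
      have h1 : xx⁻¹ * b * xx ∈ M₂ := by
        simpa using hn₂.conj_mem b hbM xx⁻¹
      have h2 : e = b⁻¹ * (xx⁻¹ * b * xx) := by rw [hedef]; group
      rw [h2]
      exact M₂.mul_mem (M₂.inv_mem hbM) h1
    have hecen : ∀ g : P, Commute e g := hcent e ⟨heM₁, heM₂⟩
    have hup : (xx * b) ^ p = e ^ (p.choose 2) := by
      rw [central_mul_pow hrel hecen p]
      have h1 : xx ^ p * b ^ p = 1 := by
        rw [hxxdef, inv_pow, ← pow_mul, mul_comm s p, hm, inv_mul_cancel]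
      rw [h1, one_mul]
    have hpodd : Odd p := hp.odd_of_ne_two hp2
    have hchoose : p.choose 2 = ((p - 1) / 2) * p := by
      obtain ⟨t, ht⟩ := hpodd
      have h1 : p - 1 = 2 * t := by omega
      rw [Nat.choose_two_right, h1, show p * (2 * t) = p * t * 2 by ring,
        Nat.mul_div_cancel _ two_pos, show 2 * t / 2 = t by omega, mul_comm]
    set f := e ^ ((p - 1) / 2) with hfdef
    have hfM₁ : f ∈ M₁ := M₁.pow_mem heM₁ _
    have hup2 : (xx * b) ^ p = f ^ p := by rw [hup, hchoose, pow_mul]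
    set v := (xx * b) * f⁻¹ with hvdef
    have hvcomm : Commute (xx * b) f⁻¹ := (((hecen (xx * b)).pow_left _).symm).inv_right
    have hvp : v ^ p = 1 := by
      rw [hvdef, hvcomm.mul_pow, hup2, inv_pow, mul_inv_cancel]
    have hvM₁ : v ∉ M₁ := by
      intro hv
      have hub : xx * b ∈ M₁ := by
        have h1 : v * f = xx * b := by rw [hvdef]; group
        rw [← h1]
        exact M₁.mul_mem hv hfM₁
      have hbM₁ : b ∈ M₁ := by
        have := M₁.mul_mem (M₁.inv_mem hxxM₁) hub
        simpa using this
      exact hne (hle_eq hM₂ hM₁ (hbeq ▸ Subgroup.zpowers_le.mpr hbM₁)).symm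
    have hv1 : v ≠ 1 := fun h => hvM₁ (h ▸ M₁.one_mem)
    have hvord : orderOf v = p := orderOf_eq_prime hvp hv1
    have hzv : z ∈ Subgroup.zpowers v := hdom v hv1
    have heqz : Subgroup.zpowers z = Subgroup.zpowers v :=
      Subgroup.eq_of_le_of_card_ge (Subgroup.zpowers_le.mpr hzv)
        (by rw [Nat.card_zpowers, Nat.card_zpowers, hz, hvord])
    exact hvM₁ (hzM₁ (heqz ▸ Subgroup.mem_zpowers v))

private lemma prod_mem_zpowers {G H : Type*} [Group G] [Group H] [Finite G] [Finite H]
    {w₁ : G} {w₂ : H} (hco : Nat.Coprime (orderOf w₁) (orderOf w₂))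
    {a : G} {b : H} (ha : a ∈ Subgroup.zpowers w₁) (hb : b ∈ Subgroup.zpowers w₂) :
    (a, b) ∈ Subgroup.zpowers (w₁, w₂) := by
  have h1 : ((w₁, (1 : H)) : G × H) ∈ Subgroup.zpowers (w₁, w₂) := by
    rcases eq_or_ne (orderOf w₁) 1 with h | h
    · have hw : w₁ = 1 := orderOf_eq_one_iff.mp h
      rw [hw]
      exact Subgroup.one_mem _
    · have hlt : 1 < orderOf w₁ := by have := orderOf_pos w₁; omega
      obtain ⟨c, -, hc⟩ := Nat.exists_mul_mod_eq_one_of_coprime hco.symm hlt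
      refine mem_powers_iff_mem_zpowers.mp ⟨orderOf w₂ * c, ?_⟩
      simp only [Prod.pow_mk, Prod.mk.injEq]
      constructor
      · calc w₁ ^ (orderOf w₂ * c) = w₁ ^ (orderOf w₂ * c % orderOf w₁) :=
              (pow_mod_orderOf _ _).symm
        _ = w₁ := by rw [hc, pow_one]
      · rw [pow_mul, pow_orderOf_eq_one, one_pow]
  have h2 : (((1 : G), w₂) : G × H) ∈ Subgroup.zpowers (w₁, w₂) := by
    rcases eq_or_ne (orderOf w₂) 1 with h | h
    · have hw : w₂ = 1 := orderOf_eq_one_iff.mp h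
      rw [hw]
      exact Subgroup.one_mem _
    · have hlt : 1 < orderOf w₂ := by have := orderOf_pos w₂; omega
      obtain ⟨c, -, hc⟩ := Nat.exists_mul_mod_eq_one_of_coprime hco hlt
      refine mem_powers_iff_mem_zpowers.mp ⟨orderOf w₁ * c, ?_⟩
      simp only [Prod.pow_mk, Prod.mk.injEq]
      constructor
      · rw [pow_mul, pow_orderOf_eq_one, one_pow]
      · calc w₂ ^ (orderOf w₁ * c) = w₂ ^ (orderOf w₁ * c % orderOf w₂) :=
              (pow_mod_orderOf _ _).symm
        _ = w₂ := by rw [hc, pow_one]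
  obtain ⟨i, hi⟩ := mem_powers_iff_mem_zpowers.mpr ha
  obtain ⟨j, hj⟩ := mem_powers_iff_mem_zpowers.mpr hb
  have hab : ((a, b) : G × H) = (w₁, (1 : H)) ^ i * ((1 : G), w₂) ^ j := by
    simp only [Prod.pow_mk, Prod.mk_mul_mk, one_pow, mul_one, one_mul]
    exact Prod.ext (by simpa using hi.symm) (by simpa using hj.symm)
  rw [hab]
  exact Subgroup.mul_mem _ (Subgroup.pow_mem _ h1 i) (Subgroup.pow_mem _ h2 j)

private lemma quat_eq_of_orderOf_two {m : ℕ} [NeZero m] {q : QuaternionGroup m}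
    (h : orderOf q = 2) : q = QuaternionGroup.a (m : ZMod (2 * m)) := by
  haveI : NeZero (2 * m) := ⟨by have := NeZero.pos m; omega⟩
  cases q with
  | a i =>
    rw [QuaternionGroup.orderOf_a] at h
    have hpos : 0 < 2 * m := by have := NeZero.pos m; omega
    obtain ⟨hgcd, -⟩ := gcd_eq_div hpos h two_pos
    have hdiv : (2 * m) / 2 = m := by omega
    rw [hdiv] at hgcd
    have hmi : m ∣ i.val := by
      have h3 := Nat.gcd_dvd_right (2 * m) i.val
      rw [hgcd] at h3
      exact h3
    have hlt : i.val < 2 * m := ZMod.val_lt i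
    have hmpos : 0 < m := NeZero.pos m
    obtain ⟨c, hc⟩ := hmi
    have hc2 : c < 2 := by nlinarith
    interval_cases c
    · rw [mul_zero] at hc
      rw [hc, Nat.gcd_zero_right] at hgcd
      omega
    · rw [mul_one] at hc
      have : ((i.val : ℕ) : ZMod (2 * m)) = i := ZMod.natCast_zmod_val i
      rw [← this, hc]
  | xa i =>
    rw [QuaternionGroup.orderOf_xa] at h
    exact absurd h (by norm_num)

private lemma quat_noncomm {m : ℕ} (hm : 2 ≤ m) {q : QuaternionGroup m}
    (h1 : q ≠ 1) (h2 : q ≠ QuaternionGroup.a (m : ZMod (2 * m))) :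
    ∃ q' : QuaternionGroup m, q * q' ≠ q' * q := by
  haveI : NeZero m := ⟨by omega⟩
  haveI : NeZero (2 * m) := ⟨by omega⟩
  cases q with
  | a i =>
    refine ⟨QuaternionGroup.xa 0, fun hEq => ?_⟩
    simp only [QuaternionGroup.a_mul_xa, QuaternionGroup.xa_mul_a, zero_sub, zero_add] at hEq
    have h' : -i = i := by injection hEq
    have h2i : ((2 * i.val : ℕ) : ZMod (2 * m)) = 0 := by
      push_cast
      rw [ZMod.natCast_zmod_val]
      linear_combination (-1 : ZMod (2 * m)) * h'
    have hdvd : 2 * m ∣ 2 * i.val := (ZMod.natCast_eq_zero_iff _ _).mp h2i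
    have hmi : m ∣ i.val := by
      obtain ⟨c, hc⟩ := hdvd
      refine ⟨c, Nat.eq_of_mul_eq_mul_left two_pos ?_⟩
      rw [hc, mul_assoc]
    have hlt : i.val < 2 * m := ZMod.val_lt i
    obtain ⟨c, hc⟩ := hmi
    have hc2 : c < 2 := by nlinarith
    interval_cases c
    · rw [mul_zero] at hc
      apply h1
      rw [QuaternionGroup.one_def, ← ZMod.natCast_zmod_val i, hc, Nat.cast_zero]
    · rw [mul_one] at hc
      apply h2
      rw [← ZMod.natCast_zmod_val i, hc]
  | xa i =>
    refine ⟨QuaternionGroup.a 1, fun hEq => ?_⟩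
    simp only [QuaternionGroup.xa_mul_a, QuaternionGroup.a_mul_xa] at hEq
    have h' : i + 1 = i - 1 := by injection hEq
    have h2' : ((2 : ℕ) : ZMod (2 * m)) = 0 := by
      push_cast
      linear_combination h'
    have hdvd : 2 * m ∣ 2 := (ZMod.natCast_eq_zero_iff _ _).mp h2'
    have := Nat.le_of_dvd two_pos hdvd
    omega

end EnhancedPowerGraphAux

theorem dominatingVertices_enhancedPowerGraph_mul_cyclic_mul_quaternion
    (G₁ : Type*) [Group G₁] [Finite G₁] [Group.IsNilpotent G₁]
    (hSyl : NoCyclicOrGenQuaternionSylow G₁)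
    (n : ℕ) [NeZero n] (k : ℕ) (hk : 3 ≤ k)
    (h1 : Nat.Coprime (Nat.card G₁) n) (h2 : Nat.Coprime (Nat.card G₁) 2)
    (h3 : Nat.Coprime n 2)
    (y : QuaternionGroup (2 ^ (k - 2))) (hy : orderOf y = 2) :
    dominatingVertices
        (enhancedPowerGraph (G₁ × Multiplicative (ZMod n) × QuaternionGroup (2 ^ (k - 2)))) =
      {z : G₁ × Multiplicative (ZMod n) × QuaternionGroup (2 ^ (k - 2)) |
        z.1 = 1 ∧ (z.2.2 = 1 ∨ z.2.2 = y)} := by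
  have hm2 : 2 ≤ 2 ^ (k - 2) := by
    calc 2 = 2 ^ 1 := (pow_one 2).symm
    _ ≤ 2 ^ (k - 2) := Nat.pow_le_pow_right two_pos (by omega)
  haveI : NeZero (2 ^ (k - 2)) := ⟨by omega⟩
  have hcardQ : Nat.card (QuaternionGroup (2 ^ (k - 2))) = 2 ^ k := by
    rw [Nat.card_eq_fintype_card, QuaternionGroup.card,
      show (4 : ℕ) = 2 ^ 2 by norm_num, ← pow_add, show 2 + (k - 2) = k by omega]
  have hcardT : Nat.card (Multiplicative (ZMod n)) = n := by
    rw [Nat.card_eq_fintype_card, Fintype.card_multiplicative, ZMod.card]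
  have hym : y = QuaternionGroup.a ((2 ^ (k - 2) : ℕ) : ZMod (2 * 2 ^ (k - 2))) :=
    quat_eq_of_orderOf_two hy
  ext z
  simp only [dominatingVertices, Set.mem_setOf_eq]
  constructor
  · -- dominating → special form
    intro hdom
    -- transfer: for every u₁ : G₁ there is a common cyclic subgroup with z.1
    have hdomg : ∀ u₁ : G₁, ∃ w₁ : G₁,
        z.1 ∈ Subgroup.zpowers w₁ ∧ u₁ ∈ Subgroup.zpowers w₁ := by
      intro u₁
      by_cases h : u₁ = z.1
      · exact ⟨z.1, Subgroup.mem_zpowers _, h ▸ Subgroup.mem_zpowers _⟩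
      · obtain ⟨-, w, hzw, huw⟩ := hdom (u₁, z.2) (fun hEq => h (congrArg Prod.fst hEq))
        obtain ⟨t₁, ht₁⟩ := Subgroup.mem_zpowers_iff.mp hzw
        obtain ⟨t₂, ht₂⟩ := Subgroup.mem_zpowers_iff.mp huw
        exact ⟨w.1, ⟨t₁, by simpa using congrArg Prod.fst ht₁⟩,
          ⟨t₂, by simpa using congrArg Prod.fst ht₂⟩⟩
    constructor
    · -- z.1 = 1
      by_contra hg1
      have hord1 : orderOf z.1 ≠ 1 := fun h => hg1 (orderOf_eq_one_iff.mp h)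
      obtain ⟨p, hp, hpd⟩ := Nat.exists_prime_and_dvd hord1
      haveI : Fact p.Prime := ⟨hp⟩
      have hpcard : p ∣ Nat.card G₁ := hpd.trans (orderOf_dvd_natCard _)
      have hp2 : p ≠ 2 := by
        rintro rfl
        have hd := Nat.dvd_gcd hpcard (dvd_refl 2)
        rw [Nat.Coprime] at h2
        rw [h2] at hd
        exact absurd (Nat.le_of_dvd one_pos hd) (by omega)
      set zz := z.1 ^ (orderOf z.1 / p) with hzzdef
      have hzz : orderOf zz = p := orderOf_pow_orderOf_div (orderOf_pos z.1).ne' hpd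
      have hpz : IsPGroup p (Subgroup.zpowers zz) :=
        IsPGroup.iff_card.mpr ⟨1, by rw [Nat.card_zpowers, hzz, pow_one]⟩
      obtain ⟨Q', hQ'⟩ := IsPGroup.exists_le_sylow hpz
      refine (hSyl p hp hpcard Q').1 ?_
      refine pgroup_isCyclic_of_unique_min (Nat.card ↥Q'.toSubgroup) ↥Q'.toSubgroup
        inferInstance inferInstance le_rfl p hp hp2 Q'.2
        ⟨zz, hQ' (Subgroup.mem_zpowers zz)⟩ (by rw [Subgroup.orderOf_mk]; exact hzz) ?_
      intro u' hu'1
      have hu₁ : (u' : G₁) ≠ 1 := fun h => hu'1 (Subtype.ext h)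
      obtain ⟨w₁, hzw, huw⟩ := hdomg (u' : G₁)
      have hzzw : zz ∈ Subgroup.zpowers w₁ := Subgroup.pow_mem _ hzw _
      have hpdvd : p ∣ orderOf (u' : G₁) := by
        obtain ⟨j, hj⟩ := IsPGroup.iff_orderOf.mp Q'.2 u'
        have hj0 : j ≠ 0 := by
          rintro rfl
          rw [pow_zero] at hj
          exact hu'1 (orderOf_eq_one_iff.mp hj)
        rw [Subgroup.orderOf_coe, hj]
        exact dvd_pow_self p hj0
      have hmem := cyc_mem_of_prime_dvd hp hzzw huw hzz hpdvd
      obtain ⟨kk, hkk⟩ := Subgroup.mem_zpowers_iff.mp hmem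
      exact Subgroup.mem_zpowers_iff.mpr ⟨kk, Subtype.ext (by simpa using hkk)⟩
    · -- z.2.2 = 1 ∨ z.2.2 = y
      by_contra hq
      push_neg at hq
      obtain ⟨hq1, hqy⟩ := hq
      obtain ⟨q', hq'⟩ := quat_noncomm hm2 hq1 (fun h => hqy (h.trans hym.symm))
      have hne : (z.1, z.2.1, q') ≠ z := by
        intro hEq
        have hqz : q' = z.2.2 := congrArg (fun v => v.2.2) hEq
        exact hq' (by rw [hqz])
      obtain ⟨-, w, hzw, huw⟩ := hdom (z.1, z.2.1, q') hne
      obtain ⟨t₁, ht₁⟩ := Subgroup.mem_zpowers_iff.mp hzw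
      obtain ⟨t₂, ht₂⟩ := Subgroup.mem_zpowers_iff.mp huw
      have hzm : z.2.2 ∈ Subgroup.zpowers w.2.2 :=
        ⟨t₁, by simpa using congrArg (fun v => v.2.2) ht₁⟩
      have hqm : q' ∈ Subgroup.zpowers w.2.2 :=
        ⟨t₂, by simpa using congrArg (fun v => v.2.2) ht₂⟩
      exact hq' (commute_of_mem_zpowers hzm hqm).eq
  · -- special form → dominating
    rintro ⟨hz1, hz2⟩ u hu
    refine ⟨Ne.symm hu, ?_⟩
    obtain ⟨c, hc⟩ := IsCyclic.exists_generator (α := Multiplicative (ZMod n))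
    -- third component
    have hw₃ : ∃ w₃ : QuaternionGroup (2 ^ (k - 2)),
        z.2.2 ∈ Subgroup.zpowers w₃ ∧ u.2.2 ∈ Subgroup.zpowers w₃ := by
      by_cases h : u.2.2 = 1
      · exact ⟨z.2.2, Subgroup.mem_zpowers _, h ▸ Subgroup.one_mem _⟩
      · refine ⟨u.2.2, ?_, Subgroup.mem_zpowers _⟩
        rcases hz2 with hz2 | hz2
        · rw [hz2]; exact Subgroup.one_mem _
        · rw [hz2, hym]
          have hdvd2 : 2 ∣ orderOf u.2.2 := by
            have hdd : orderOf u.2.2 ∣ 2 ^ k := by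
              have := orderOf_dvd_natCard u.2.2
              rwa [hcardQ] at this
            obtain ⟨j, hjk, hj⟩ := (Nat.dvd_prime_pow Nat.prime_two).mp hdd
            have hj0 : j ≠ 0 := by
              rintro rfl
              rw [pow_zero] at hj
              exact h (orderOf_eq_one_iff.mp hj)
            rw [hj]
            exact dvd_pow_self 2 hj0
          have h22 : orderOf (u.2.2 ^ (orderOf u.2.2 / 2)) = 2 :=
            orderOf_pow_orderOf_div (orderOf_pos u.2.2).ne' hdvd2
          rw [← quat_eq_of_orderOf_two h22]
          exact Subgroup.pow_mem _ (Subgroup.mem_zpowers _) _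
    obtain ⟨w₃, hzw₃, huw₃⟩ := hw₃
    have hcdvd : orderOf c ∣ n := by
      have := orderOf_dvd_natCard c
      rwa [hcardT] at this
    have hw3dvd : orderOf w₃ ∣ 2 ^ k := by
      have := orderOf_dvd_natCard w₃
      rwa [hcardQ] at this
    have hco2 : Nat.Coprime (orderOf c) (orderOf w₃) :=
      Nat.Coprime.coprime_dvd_right hw3dvd
        (Nat.Coprime.coprime_dvd_left hcdvd (h3.pow_right k))
    have hco1 : Nat.Coprime (orderOf u.1) (orderOf ((c, w₃) :
        Multiplicative (ZMod n) × QuaternionGroup (2 ^ (k - 2)))) := by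
      refine Nat.Coprime.coprime_dvd_right (orderOf_dvd_natCard _) ?_
      refine Nat.Coprime.coprime_dvd_left (orderOf_dvd_natCard u.1) ?_
      rw [Nat.card_prod, hcardT, hcardQ]
      exact h1.mul_right (h2.pow_right k)
    refine ⟨(u.1, c, w₃), ?_, ?_⟩
    · exact prod_mem_zpowers hco1 (by rw [hz1]; exact Subgroup.one_mem _)
        (prod_mem_zpowers hco2 (hc z.2.1) hzw₃)
    · exact prod_mem_zpowers hco1 (Subgroup.mem_zpowers _)
        (prod_mem_zpowers hco2 (hc u.2.1) huw₃)
end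

section
/- Let G be a finite group and n a positive integer with gcd(|G|, n) = 1. Then every element of the form (e, a) with a ∈ ℤ_n, where e is the identity of G, is a dominating vertex of the enhanced power graph of G × ℤ_n; that is, {(e, a) : a ∈ ℤ_n} ⊆ Dom(𝒢_E(G × ℤ_n)). -/
theorem identity_mul_cyclic_subset_dominatingVertices
    (G : Type*) [Group G] [Finite G] (n : ℕ) [NeZero n]
    (hgcd : Nat.Coprime (Nat.card G) n) :
    {z : G × Multiplicative (ZMod n) | z.1 = 1} ⊆
      dominatingVertices (enhancedPowerGraph (G × Multiplicative (ZMod n))) := by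
  rintro ⟨z1, a⟩ hz ⟨g, b⟩ hu
  simp only [Set.mem_setOf_eq] at hz
  subst hz
  refine ⟨fun h => hu h.symm, ⟨g, Multiplicative.ofAdd (1 : ZMod n)⟩, ?_, ?_⟩
  · -- (1, a) ∈ ⟨(g, c)⟩
    have hm : Nat.Coprime (orderOf g) n :=
      Nat.Coprime.coprime_dvd_left (orderOf_dvd_natCard g) hgcd
    obtain ⟨k, hk1, hk2⟩ := Nat.chineseRemainder hm 0 (Multiplicative.toAdd a).val
    refine ⟨(k : ℤ), ?_⟩
    simp only [zpow_natCast, Prod.pow_mk, Prod.mk.injEq]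
    constructor
    · exact orderOf_dvd_iff_pow_eq_one.mp ((Nat.modEq_zero_iff_dvd).mp hk1)
    · have : ((k : ℕ) : ZMod n) = Multiplicative.toAdd a := by
        rw [ZMod.natCast_eq_natCast_iff _ _ _ |>.mpr hk2]
        exact ZMod.natCast_rightInverse (Multiplicative.toAdd a)
      calc Multiplicative.ofAdd (1 : ZMod n) ^ k
          = Multiplicative.ofAdd ((k : ℕ) • (1 : ZMod n)) := by
            rw [← ofAdd_nsmul]
        _ = a := by rw [nsmul_eq_mul, mul_one, this]; rfl
  · -- (g, b) ∈ ⟨(g, c)⟩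
    have hm : Nat.Coprime (orderOf g) n :=
      Nat.Coprime.coprime_dvd_left (orderOf_dvd_natCard g) hgcd
    obtain ⟨k, hk1, hk2⟩ := Nat.chineseRemainder hm 1 (Multiplicative.toAdd b).val
    refine ⟨(k : ℤ), ?_⟩
    simp only [zpow_natCast, Prod.pow_mk, Prod.mk.injEq]
    constructor
    · have := (pow_eq_pow_iff_modEq (x := g) (n := k) (m := 1)).mpr hk1
      simpa using this
    · have : ((k : ℕ) : ZMod n) = Multiplicative.toAdd b := by
        rw [ZMod.natCast_eq_natCast_iff _ _ _ |>.mpr hk2]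
        exact ZMod.natCast_rightInverse (Multiplicative.toAdd b)
      calc Multiplicative.ofAdd (1 : ZMod n) ^ k
          = Multiplicative.ofAdd ((k : ℕ) • (1 : ZMod n)) := by
            rw [← ofAdd_nsmul]
        _ = b := by rw [nsmul_eq_mul, mul_one, this]; rfl
end

section
/- Let G₁, …, G_r be finite groups. If (a₁, …, a_r) is a dominating vertex of the enhanced power graph of G₁ × ⋯ × G_r, then for each i ∈ [r], a_i is a dominating vertex of the enhanced power graph of G_i; that is, Dom(𝒢_E(G₁ × ⋯ × G_r)) ⊆ Dom(𝒢_E(G₁)) × ⋯ × Dom(𝒢_E(G_r)). -/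
theorem dominatingVertices_enhancedPowerGraph_pi
    (r : ℕ) (G : Fin r → Type*) [∀ i, Group (G i)] [∀ i, Finite (G i)]
    (a : ∀ i, G i) (ha : a ∈ dominatingVertices (enhancedPowerGraph (∀ i, G i))) :
    ∀ i, a i ∈ dominatingVertices (enhancedPowerGraph (G i)) := by
  intro i u hu
  have hb : Function.update a i u ≠ a := by
    intro h
    exact hu (by simpa using congrFun h i)
  obtain ⟨hne, w, ⟨n, hn⟩, ⟨m, hm⟩⟩ := ha (Function.update a i u) hb
  refine ⟨hu.symm, w i, ⟨n, ?_⟩, ⟨m, ?_⟩⟩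
  · exact congrFun hn i
  · have := congrFun hm i
    simpa using this
end

section
/- Let G₁ be a finite abelian group, n a positive integer with gcd(|G₁|, n) = 1, and G = G₁ × ℤ_n. Let S be a subset of G₁ such that the subgraph of the enhanced power graph 𝒢_E(G₁) induced on G₁ \ S has exactly r connected components. Then the subgraph of 𝒢_E(G) induced on G \ (S × ℤ_n) has at least r connected components. In particular, if the induced subgraph on G₁ \ S is disconnected, then the induced subgraph on G \ (S × ℤ_n) is disconnected. -/
section Aux
variable {G₁ H : Type*} [Group G₁] [Group H] {S : Set G₁}

/-- Embedding hom: x ↦ (x, 1). -/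
def epgEmbedHom (S : Set G₁) :
    ((enhancedPowerGraph G₁).induce Sᶜ) →g
      ((enhancedPowerGraph (G₁ × H)).induce {z : G₁ × H | z.1 ∉ S}) where
  toFun x := ⟨(x.1, 1), x.2⟩
  map_rel' := by
    rintro ⟨x, hx⟩ ⟨y, hy⟩ ⟨hne, w, ⟨k, hk⟩, ⟨l, hl⟩⟩
    refine ⟨?_, (w, 1), ⟨k, ?_⟩, ⟨l, ?_⟩⟩
    · exact fun h => hne (congrArg Prod.fst h)
    · ext <;> simp [hk]
    · ext <;> simp [hl]

lemma epg_proj_reach (u v : {z : G₁ × H | z.1 ∉ S})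
    (h : ((enhancedPowerGraph (G₁ × H)).induce {z : G₁ × H | z.1 ∉ S}).Reachable u v) :
    ((enhancedPowerGraph G₁).induce Sᶜ).Reachable ⟨u.1.1, u.2⟩ ⟨v.1.1, v.2⟩ := by
  obtain ⟨p⟩ := h
  induction p with
  | nil => rfl
  | cons h p ih =>
    rename_i a b c
    refine SimpleGraph.Reachable.trans ?_ ih
    obtain ⟨hne, w, ⟨k, hk⟩, ⟨l, hl⟩⟩ := h
    by_cases hab : a.1.1 = b.1.1
    · have he : (⟨a.1.1, a.2⟩ : ↥Sᶜ) = ⟨b.1.1, b.2⟩ := Subtype.ext hab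
      rw [he]
    · exact SimpleGraph.Adj.reachable
        ⟨fun h => hab h, w.1, ⟨k, congrArg Prod.fst hk⟩,
          ⟨l, congrArg Prod.fst hl⟩⟩
end Aux

theorem components_of_induced_subgraph_mul_cyclic
    (G₁ : Type*) [CommGroup G₁] [Finite G₁] (n : ℕ) [NeZero n]
    (hgcd : Nat.Coprime (Nat.card G₁) n)
    (S : Set G₁) (r : ℕ)
    (hr : Nat.card ((enhancedPowerGraph G₁).induce Sᶜ).ConnectedComponent = r) :
    r ≤ Nat.card ((enhancedPowerGraph (G₁ × Multiplicative (ZMod n))).induce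
          {z : G₁ × Multiplicative (ZMod n) | z.1 ∉ S}).ConnectedComponent ∧
    (¬ ((enhancedPowerGraph G₁).induce Sᶜ).Connected →
      ¬ ((enhancedPowerGraph (G₁ × Multiplicative (ZMod n))).induce
          {z : G₁ × Multiplicative (ZMod n) | z.1 ∉ S}).Connected) := by
  set H := Multiplicative (ZMod n)
  set Γ₁ := (enhancedPowerGraph G₁).induce Sᶜ
  set Γ := (enhancedPowerGraph (G₁ × H)).induce {z : G₁ × H | z.1 ∉ S}
  have hinj : Function.Injective
      (SimpleGraph.ConnectedComponent.map (epgEmbedHom (H := H) S)) := by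
    intro c d
    refine SimpleGraph.ConnectedComponent.ind₂ (fun x y h => ?_) c d
    have hreach : Γ.Reachable (epgEmbedHom S x) (epgEmbedHom S y) :=
      (SimpleGraph.ConnectedComponent.eq).mp h
    have := epg_proj_reach _ _ hreach
    have hx : (⟨(epgEmbedHom (H := H) S x).1.1, (epgEmbedHom S x).2⟩ : ↥Sᶜ) = x :=
      Subtype.ext rfl
    have hy : (⟨(epgEmbedHom (H := H) S y).1.1, (epgEmbedHom S y).2⟩ : ↥Sᶜ) = y :=
      Subtype.ext rfl
    rw [hx, hy] at this
    exact (SimpleGraph.ConnectedComponent.eq).mpr this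
  constructor
  · rw [← hr]
    exact Nat.card_le_card_of_injective _ hinj
  · intro hdis hcon
    apply hdis
    obtain ⟨⟨z, hz⟩⟩ := hcon.nonempty
    have : Nonempty ↥Sᶜ := ⟨⟨z.1, hz⟩⟩
    refine ⟨fun x y => ?_⟩
    have hreach : Γ.Reachable (epgEmbedHom S x) (epgEmbedHom S y) := hcon.preconnected _ _
    have := epg_proj_reach _ _ hreach
    have hx : (⟨(epgEmbedHom (H := H) S x).1.1, (epgEmbedHom S x).2⟩ : ↥Sᶜ) = x :=
      Subtype.ext rfl
    have hy : (⟨(epgEmbedHom (H := H) S y).1.1, (epgEmbedHom S y).2⟩ : ↥Sᶜ) = y :=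
      Subtype.ext rfl
    rwa [hx, hy] at this
end

section
/- Let G be the non-cyclic abelian group G ≅ ∏_{i=1}^{r} (ℤ_{p_i^{t_{i1}}} × ⋯ × ℤ_{p_i^{t_{ik_i}}}) × ℤ_{p_{r+1}^{t_{r+1,1}}} × ⋯ × ℤ_{p_s^{t_{s,1}}}, where p₁, …, p_s are distinct primes, k_i ≥ 2 and 1 ≤ t_{i1} ≤ t_{i2} ≤ ⋯ ≤ t_{ik_i} for all i ∈ [r]. Then the vertex connectivity of the enhanced power graph of G satisfies κ(𝒢_E(G)) ≤ p_{r+1}^{t_{r+1,1}} ⋯ p_s^{t_{s,1}} · (p₁^{t_{11}} p₂^{t_{21}} ⋯ p_r^{t_{r1}} − φ(p₁^{t_{11}} p₂^{t_{21}} ⋯ p_r^{t_{r1}})), where φ is Euler's totient function. -/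
open Finset in
lemma my_totient_prod {ι : Type*} [DecidableEq ι] (s : Finset ι) (f : ι → ℕ)
    (hc : ∀ i ∈ s, ∀ j ∈ s, i ≠ j → Nat.Coprime (f i) (f j)) :
    Nat.totient (∏ i ∈ s, f i) = ∏ i ∈ s, Nat.totient (f i) := by
  induction s using Finset.induction_on with
  | empty => simp
  | @insert a s ha ih =>
    have hcop : Nat.Coprime (f a) (∏ i ∈ s, f i) :=
      Nat.Coprime.prod_right fun i hi =>
        hc a (mem_insert_self a s) i (mem_insert_of_mem hi) (by rintro rfl; exact ha hi)
    rw [Finset.prod_insert ha, Finset.prod_insert ha, Nat.totient_mul hcop,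
      ih fun i hi j hj hij => hc i (mem_insert_of_mem hi) j (mem_insert_of_mem hj) hij]

open Finset in
lemma my_prod_dvd {ι : Type*} [DecidableEq ι] (s : Finset ι) (f : ι → ℕ) (n : ℕ)
    (hc : ∀ i ∈ s, ∀ j ∈ s, i ≠ j → Nat.Coprime (f i) (f j)) (hd : ∀ i ∈ s, f i ∣ n) :
    (∏ i ∈ s, f i) ∣ n := by
  induction s using Finset.induction_on with
  | empty => simp
  | @insert a s ha ih =>
    have hcop : Nat.Coprime (f a) (∏ i ∈ s, f i) :=
      Nat.Coprime.prod_right fun i hi =>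
        hc a (mem_insert_self a s) i (mem_insert_of_mem hi) (by rintro rfl; exact ha hi)
    rw [Finset.prod_insert ha]
    exact hcop.mul_dvd_of_dvd_of_dvd (hd a (mem_insert_self a s))
      (ih (fun i hi j hj hij => hc i (mem_insert_of_mem hi) j (mem_insert_of_mem hj) hij)
        fun i hi => hd i (mem_insert_of_mem hi))

lemma my_units_card (n : ℕ) [NeZero n] :
    Nat.card {a : Multiplicative (ZMod n) // IsUnit (Multiplicative.toAdd a)} = Nat.totient n := by
  have e1 : {a : Multiplicative (ZMod n) // IsUnit (Multiplicative.toAdd a)} ≃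
      {b : ZMod n // IsUnit b} := Equiv.subtypeEquiv Multiplicative.toAdd fun a => Iff.rfl
  have e2 : (ZMod n)ˣ ≃ {b : ZMod n // IsUnit b} :=
    { toFun := fun u => ⟨u, u.isUnit⟩
      invFun := fun b => b.2.unit
      left_inv := fun u => Units.ext u.isUnit.unit_spec
      right_inv := fun b => Subtype.ext b.2.unit_spec }
  rw [Nat.card_congr e1, ← Nat.card_congr e2, Nat.card_eq_fintype_card,
    ZMod.card_units_eq_totient]


theorem vertexConnectivity_enhancedPowerGraph_le_of_abelian
    (s r : ℕ) (hrs : r ≤ s)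
    (p : Fin s → ℕ) (hp : ∀ i, (p i).Prime) (hinj : Function.Injective p)
    (k : Fin s → ℕ) (hk1 : ∀ i, 1 ≤ k i)
    (hk2 : ∀ i : Fin s, (i : ℕ) < r → 2 ≤ k i)
    (hkone : ∀ i : Fin s, r ≤ (i : ℕ) → k i = 1)
    (t : (i : Fin s) → Fin (k i) → ℕ) (ht1 : ∀ i j, 1 ≤ t i j)
    (htmono : ∀ i, Monotone (t i))
    (G : Type*) [Group G] (hnc : ¬ IsCyclic G)
    (e : G ≃* ((i : Fin s) → (j : Fin (k i)) → Multiplicative (ZMod (p i ^ t i j)))) :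
    vertexConnectivity (enhancedPowerGraph G) ≤
      (∏ i ∈ Finset.univ.filter (fun i : Fin s => r ≤ (i : ℕ)), p i ^ t i ⟨0, hk1 i⟩) *
      ((∏ i ∈ Finset.univ.filter (fun i : Fin s => (i : ℕ) < r), p i ^ t i ⟨0, hk1 i⟩) -
        Nat.totient
          (∏ i ∈ Finset.univ.filter (fun i : Fin s => (i : ℕ) < r), p i ^ t i ⟨0, hk1 i⟩)) := by
  classical
  haveI hNZ : ∀ (i : Fin s) (j : Fin (k i)), NeZero (p i ^ t i j) :=
    fun i j => ⟨pow_ne_zero _ (hp i).pos.ne'⟩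
  set P := ((i : Fin s) → (j : Fin (k i)) → Multiplicative (ZMod (p i ^ t i j))) with hPdef
  haveI : Finite P := by infer_instance
  set j0 : (i : Fin s) → Fin (k i) := fun i => ⟨0, hk1 i⟩ with hj0def
  have hj0 : ∀ i, j0 i = ⟨0, hk1 i⟩ := fun _ => by rw [hj0def]
  -- pairwise coprimality of the prime powers
  have hcop : ∀ (i i' : Fin s), i ≠ i' → ∀ a b : ℕ,
      Nat.Coprime (p i ^ a) (p i' ^ b) := by
    intro i i' hne a b
    exact Nat.Coprime.pow a b ((Nat.coprime_primes (hp i) (hp i')).mpr (fun h => hne (hinj h)))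
  -- r is positive
  have hr : 0 < r := by
    by_contra hr0
    push_neg at hr0
    apply hnc
    have hdvd : ∀ (i : Fin s) (j : Fin (k i)),
        p i ^ t i j ∣ orderOf (fun i j => Multiplicative.ofAdd 1 : P) := by
      intro i j
      have hcoord : orderOf ((fun i j => Multiplicative.ofAdd 1 : P) i j) = p i ^ t i j := by
        show orderOf (Multiplicative.ofAdd (1 : ZMod (p i ^ t i j))) = _
        rw [orderOf_ofAdd_eq_addOrderOf, ZMod.addOrderOf_one]
      rw [← hcoord]
      apply orderOf_dvd_of_pow_eq_one
      have h2 := congrFun (congrFun (pow_orderOf_eq_one (fun i j => Multiplicative.ofAdd 1 : P)) i) j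
      simpa using h2
    have hcardP : Nat.card P = ∏ i : Fin s, p i ^ t i (j0 i) := by
      rw [Nat.card_pi]
      refine Finset.prod_congr rfl fun i _ => ?_
      rw [Nat.card_pi]
      have hcc : ∀ j : Fin (k i),
          Nat.card (Multiplicative (ZMod (p i ^ t i j))) = p i ^ t i j := by
        intro j
        rw [Nat.card_congr Multiplicative.toAdd, Nat.card_zmod]
      have huniv : (Finset.univ : Finset (Fin (k i))) = {j0 i} := by
        refine Finset.eq_singleton_iff_unique_mem.mpr ⟨Finset.mem_univ _, fun x _ => ?_⟩
        refine Fin.ext ?_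
        have h1 := x.isLt
        have h2 := hkone i (by omega)
        rw [hj0]
        omega
      rw [huniv, Finset.prod_singleton, hcc]
    have : IsCyclic P := by
      apply isCyclic_of_orderOf_eq_card (fun i j => Multiplicative.ofAdd 1 : P)
      refine Nat.dvd_antisymm (orderOf_dvd_natCard _) ?_
      rw [hcardP]
      apply my_prod_dvd
      · intro i _ i' _ hne
        exact hcop i i' hne _ _
      · intro i _
        exact hdvd i (j0 i)
    exact isCyclic_of_surjective e.symm.toMonoidHom e.symm.surjective
  have hs0 : 0 < s := lt_of_lt_of_le hr hrs
  set i0 : Fin s := ⟨0, hs0⟩ with hi0def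
  have hi0r : (i0 : ℕ) < r := hr
  set j1 : Fin (k i0) := ⟨1, hk2 i0 hi0r⟩ with hj1def
  -- the key sets
  set Cfull : Set P := {x | ∀ (i : Fin s) (j : Fin (k i)), (j : ℕ) ≠ 0 → x i j = 1}
    with hCfulldef
  set Cgood : Set P := {x | ∀ (i : Fin s) (j : Fin (k i)),
      if (j : ℕ) = 0 then ((i : ℕ) < r → IsUnit (Multiplicative.toAdd (x i j)))
      else x i j = 1} with hCgooddef
  set S : Set G := ⇑e ⁻¹' (Cfull \ Cgood) with hSdef
  have hsub : Cgood ⊆ Cfull := by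
    intro x hx i j hj
    have := hx i j
    rwa [if_neg hj] at this
  -- special elements
  set aP : P := fun i j => if (j : ℕ) = 0 then Multiplicative.ofAdd 1 else 1 with haPdef
  set bP : P := fun i j => if (i : ℕ) = 0 ∧ (j : ℕ) = 1 then Multiplicative.ofAdd 1 else 1
    with hbPdef
  have hone_ne : ∀ (i : Fin s) (j : Fin (k i)),
      (Multiplicative.ofAdd (1 : ZMod (p i ^ t i j))) ≠ 1 := by
    intro i j
    haveI : Fact (1 < p i ^ t i j) :=
      ⟨Nat.one_lt_pow (by have := ht1 i j; omega) (hp i).one_lt⟩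
    rw [Ne, ofAdd_eq_one]
    exact one_ne_zero
  have haP : aP ∈ Cgood := by
    intro i j
    by_cases hj : (j : ℕ) = 0
    · rw [if_pos hj]
      intro _
      have : aP i j = Multiplicative.ofAdd 1 := by rw [haPdef]; simp [hj]
      rw [this]
      exact isUnit_one
    · rw [if_neg hj]
      rw [haPdef]
      simp [hj]
  have hbP : bP ∉ Cfull := by
    intro h
    have h1 := h i0 j1 (by rw [hj1def]; exact Nat.one_ne_zero)
    rw [hbPdef] at h1
    simp only [hi0def, hj1def] at h1
    exact hone_ne i0 j1 (by simpa [hi0def, hj1def] using h1)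
  -- the key adjacency lemma
  have key : ∀ (u v : G), e u ∈ Cfull → e u ∈ Cgood →
      (∃ w : G, u ∈ Subgroup.zpowers w ∧ v ∈ Subgroup.zpowers w) → e v ∈ Cfull := by
    rintro u v hfull hgood ⟨w0, hu, hv⟩
    have hu' : e u ∈ Subgroup.zpowers (e w0) := by
      obtain ⟨m, hm⟩ := hu
      exact ⟨m, by rw [← hm, map_zpow]⟩
    have hv' : e v ∈ Subgroup.zpowers (e w0) := by
      obtain ⟨m, hm⟩ := hv
      exact ⟨m, by rw [← hm, map_zpow]⟩
    obtain ⟨m, hm⟩ := (Submonoid.mem_powers_iff _ _).mp (mem_powers_iff_mem_zpowers.mpr hu')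
    obtain ⟨n, hn⟩ := (Submonoid.mem_powers_iff _ _).mp (mem_powers_iff_mem_zpowers.mpr hv')
    intro i j hj
    rcases Nat.lt_or_ge (i : ℕ) r with hir | hir
    · -- here the real argument happens
      have h1 : IsUnit (Multiplicative.toAdd (e u i (j0 i))) := by
        have := hgood i (j0 i)
        rw [if_pos rfl] at this
        exact this hir
      have h1' : IsUnit ((m : ZMod (p i ^ t i (j0 i))) * Multiplicative.toAdd (e w0 i (j0 i))) := by
        rw [← hm] at h1
        have : Multiplicative.toAdd ((e w0 ^ m) i (j0 i)) =
            (m : ZMod (p i ^ t i (j0 i))) * Multiplicative.toAdd (e w0 i (j0 i)) := by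
          rw [show (e w0 ^ m) i (j0 i) = (e w0 i (j0 i)) ^ m from rfl, toAdd_pow, nsmul_eq_mul]
        rwa [this] at h1
      have hmu : IsUnit ((m : ZMod (p i ^ t i (j0 i)))) := isUnit_of_mul_isUnit_left h1'
      have hco : Nat.Coprime m (p i ^ t i (j0 i)) := (ZMod.isUnit_iff_coprime m _).mp hmu
      have hcp : Nat.Coprime m (p i) :=
        Nat.Coprime.coprime_dvd_right (dvd_pow_self (p i) (by have := ht1 i (j0 i); omega)) hco
      have hmu' : IsUnit ((m : ZMod (p i ^ t i j))) :=
        (ZMod.isUnit_iff_coprime m _).mpr (hcp.pow_right _)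
      have h2 : (e u) i j = 1 := hfull i j hj
      have h2' : (m : ZMod (p i ^ t i j)) * Multiplicative.toAdd (e w0 i j) = 0 := by
        rw [← hm] at h2
        have : Multiplicative.toAdd ((e w0 ^ m) i j) =
            (m : ZMod (p i ^ t i j)) * Multiplicative.toAdd (e w0 i j) := by
          rw [show (e w0 ^ m) i j = (e w0 i j) ^ m from rfl, toAdd_pow, nsmul_eq_mul]
        rw [← this, h2]
        rfl
      have h3 : e w0 i j = 1 := by
        rw [← toAdd_eq_zero]
        exact (hmu'.mul_right_eq_zero).mp h2'
      rw [← hn, show (e w0 ^ n) i j = (e w0 i j) ^ n from rfl, h3, one_pow]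
    · exfalso
      have hki := hkone i hir
      have := j.isLt
      omega
  -- disconnection
  have haS : e.symm aP ∈ Sᶜ := by
    intro hmem
    have hmem' : e (e.symm aP) ∈ Cfull \ Cgood := hmem
    rw [MulEquiv.apply_symm_apply] at hmem'
    exact hmem'.2 haP
  have hbS : e.symm bP ∈ Sᶜ := by
    intro hmem
    have hmem' : e (e.symm bP) ∈ Cfull \ Cgood := hmem
    rw [MulEquiv.apply_symm_apply] at hmem'
    exact hbP hmem'.1
  have hdis : ¬ ((enhancedPowerGraph G).induce Sᶜ).Connected := by
    intro hcon
    obtain ⟨w⟩ := hcon.preconnected ⟨e.symm aP, haS⟩ ⟨e.symm bP, hbS⟩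
    have inv : ∀ (x y : ↥Sᶜ) (w : ((enhancedPowerGraph G).induce Sᶜ).Walk x y),
        e ↑x ∈ Cfull → e ↑y ∈ Cfull := by
      intro x y w
      induction w with
      | nil => exact id
      | @cons x' y' z' h pw ih =>
        intro hx
        apply ih
        obtain ⟨hne, hw⟩ : (x'.1 ≠ y'.1 ∧ ∃ w : G, x'.1 ∈ Subgroup.zpowers w ∧
            y'.1 ∈ Subgroup.zpowers w) := h
        refine key _ _ hx ?_ hw
        by_contra hng
        exact x'.2 ⟨hx, hng⟩
    have hlast := inv _ _ w (by
      show e (e.symm aP) ∈ Cfull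
      rw [MulEquiv.apply_symm_apply]
      exact hsub haP)
    have hlast' : e (e.symm bP) ∈ Cfull := hlast
    rw [MulEquiv.apply_symm_apply] at hlast'
    exact hbP hlast'
  -- counting
  have hCfull_card : Nat.card ↥Cfull = ∏ i : Fin s, p i ^ t i (j0 i) := by
    have e1 : ↥Cfull ≃ ∀ i : Fin s,
        {y : ∀ j : Fin (k i), Multiplicative (ZMod (p i ^ t i j)) //
          ∀ j : Fin (k i), (j : ℕ) ≠ 0 → y j = 1} :=
      Equiv.subtypePiEquivPi
        (p := fun (i : Fin s) (y : ∀ j : Fin (k i), Multiplicative (ZMod (p i ^ t i j))) =>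
          ∀ j : Fin (k i), (j : ℕ) ≠ 0 → y j = 1)
    have e2 : ∀ i : Fin s,
        {y : ∀ j : Fin (k i), Multiplicative (ZMod (p i ^ t i j)) //
          ∀ j : Fin (k i), (j : ℕ) ≠ 0 → y j = 1} ≃
        ∀ j : Fin (k i), {a : Multiplicative (ZMod (p i ^ t i j)) // (j : ℕ) ≠ 0 → a = 1} :=
      fun i => Equiv.subtypePiEquivPi
        (p := fun (j : Fin (k i)) (a : Multiplicative (ZMod (p i ^ t i j))) =>
          (j : ℕ) ≠ 0 → a = 1)
    rw [Nat.card_congr (e1.trans (Equiv.piCongrRight e2)), Nat.card_pi]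
    refine Finset.prod_congr rfl fun i _ => ?_
    rw [Nat.card_pi]
    rw [Finset.prod_eq_single_of_mem (j0 i) (Finset.mem_univ _) ?_]
    · rw [Nat.card_congr (Equiv.subtypeUnivEquiv (fun a h => absurd rfl h)),
        Nat.card_congr Multiplicative.toAdd, Nat.card_zmod]
    · intro j _ hjne
      have hjj : (j : ℕ) ≠ 0 := fun h0 => hjne (Fin.ext h0)
      haveI : Unique {a : Multiplicative (ZMod (p i ^ t i j)) // (j : ℕ) ≠ 0 → a = 1} :=
        { default := ⟨1, fun _ => rfl⟩
          uniq := fun a => Subtype.ext (a.2 hjj) }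
      exact Nat.card_unique
  have hCgood_card : Nat.card ↥Cgood =
      (∏ i ∈ Finset.univ.filter (fun i : Fin s => (i : ℕ) < r),
        Nat.totient (p i ^ t i (j0 i))) *
      (∏ i ∈ Finset.univ.filter (fun i : Fin s => ¬ (i : ℕ) < r), p i ^ t i (j0 i)) := by
    have e1 : ↥Cgood ≃ ∀ i : Fin s,
        {y : ∀ j : Fin (k i), Multiplicative (ZMod (p i ^ t i j)) //
          ∀ j : Fin (k i), if (j : ℕ) = 0 then ((i : ℕ) < r → IsUnit (Multiplicative.toAdd (y j)))
            else y j = 1} :=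
      Equiv.subtypePiEquivPi
        (p := fun (i : Fin s) (y : ∀ j : Fin (k i), Multiplicative (ZMod (p i ^ t i j))) =>
          ∀ j : Fin (k i), if (j : ℕ) = 0 then ((i : ℕ) < r → IsUnit (Multiplicative.toAdd (y j)))
            else y j = 1)
    have e2 : ∀ i : Fin s,
        {y : ∀ j : Fin (k i), Multiplicative (ZMod (p i ^ t i j)) //
          ∀ j : Fin (k i), if (j : ℕ) = 0 then ((i : ℕ) < r → IsUnit (Multiplicative.toAdd (y j)))
            else y j = 1} ≃
        ∀ j : Fin (k i), {a : Multiplicative (ZMod (p i ^ t i j)) //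
          if (j : ℕ) = 0 then ((i : ℕ) < r → IsUnit (Multiplicative.toAdd a)) else a = 1} :=
      fun i => Equiv.subtypePiEquivPi
        (p := fun (j : Fin (k i)) (a : Multiplicative (ZMod (p i ^ t i j))) =>
          if (j : ℕ) = 0 then ((i : ℕ) < r → IsUnit (Multiplicative.toAdd a)) else a = 1)
    rw [Nat.card_congr (e1.trans (Equiv.piCongrRight e2)), Nat.card_pi]
    have hfac : ∀ i : Fin s,
        Nat.card ((j : Fin (k i)) → {a : Multiplicative (ZMod (p i ^ t i j)) //
          if (j : ℕ) = 0 then ((i : ℕ) < r → IsUnit (Multiplicative.toAdd a)) else a = 1}) =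
        if (i : ℕ) < r then Nat.totient (p i ^ t i (j0 i)) else p i ^ t i (j0 i) := by
      intro i
      rw [Nat.card_pi, Finset.prod_eq_single_of_mem (j0 i) (Finset.mem_univ _) ?_]
      · by_cases hir : (i : ℕ) < r
        · rw [if_pos hir]
          have eq1 : {a : Multiplicative (ZMod (p i ^ t i (j0 i))) //
              if ((j0 i : Fin (k i)) : ℕ) = 0 then ((i : ℕ) < r → IsUnit (Multiplicative.toAdd a))
              else a = 1} ≃
              {a : Multiplicative (ZMod (p i ^ t i (j0 i))) // IsUnit (Multiplicative.toAdd a)} :=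
            Equiv.subtypeEquivRight (fun a => by rw [if_pos rfl]; exact ⟨fun h => h hir, fun h _ => h⟩)
          rw [Nat.card_congr eq1, my_units_card]
        · rw [if_neg hir]
          have eq1 : {a : Multiplicative (ZMod (p i ^ t i (j0 i))) //
              if ((j0 i : Fin (k i)) : ℕ) = 0 then ((i : ℕ) < r → IsUnit (Multiplicative.toAdd a))
              else a = 1} ≃ Multiplicative (ZMod (p i ^ t i (j0 i))) :=
            Equiv.subtypeUnivEquiv (fun a => by rw [if_pos rfl]; exact fun h => absurd h hir)
          rw [Nat.card_congr eq1, Nat.card_congr Multiplicative.toAdd, Nat.card_zmod]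
      · intro j _ hjne
        have hjj : (j : ℕ) ≠ 0 := fun h0 => hjne (Fin.ext h0)
        haveI : Unique {a : Multiplicative (ZMod (p i ^ t i j)) //
            if (j : ℕ) = 0 then ((i : ℕ) < r → IsUnit (Multiplicative.toAdd a)) else a = 1} :=
          { default := ⟨1, by rw [if_neg hjj]⟩
            uniq := fun a => Subtype.ext (by have := a.2; rwa [if_neg hjj] at this) }
        exact Nat.card_unique
    rw [Finset.prod_congr rfl fun i _ => hfac i, Finset.prod_ite]
  -- put the counts together
  have hAtot : Nat.totient (∏ i ∈ Finset.univ.filter (fun i : Fin s => (i : ℕ) < r),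
      p i ^ t i (j0 i)) =
      ∏ i ∈ Finset.univ.filter (fun i : Fin s => (i : ℕ) < r), Nat.totient (p i ^ t i (j0 i)) :=
    my_totient_prod _ _ (fun i _ i' _ hne => hcop i i' hne _ _)
  have hBf : (∏ i ∈ Finset.univ.filter (fun i : Fin s => r ≤ (i : ℕ)), p i ^ t i (j0 i)) =
      ∏ i ∈ Finset.univ.filter (fun i : Fin s => ¬ (i : ℕ) < r), p i ^ t i (j0 i) := by
    apply Finset.prod_congr _ (fun _ _ => rfl)
    apply Finset.filter_congr
    intro i _
    simp [not_lt]
  have hsplit : (∏ i : Fin s, p i ^ t i (j0 i)) =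
      (∏ i ∈ Finset.univ.filter (fun i : Fin s => (i : ℕ) < r), p i ^ t i (j0 i)) *
      (∏ i ∈ Finset.univ.filter (fun i : Fin s => ¬ (i : ℕ) < r), p i ^ t i (j0 i)) :=
    (Finset.prod_filter_mul_prod_filter_not _ _ _).symm
  have hScard : S.ncard =
      (∏ i ∈ Finset.univ.filter (fun i : Fin s => r ≤ (i : ℕ)), p i ^ t i (j0 i)) *
      ((∏ i ∈ Finset.univ.filter (fun i : Fin s => (i : ℕ) < r), p i ^ t i (j0 i)) -
        Nat.totient (∏ i ∈ Finset.univ.filter (fun i : Fin s => (i : ℕ) < r),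
          p i ^ t i (j0 i))) := by
    have him : S = ⇑(e.symm.toEquiv) '' (Cfull \ Cgood) := by
      rw [Equiv.image_eq_preimage_symm]
      rfl
    rw [him, Set.ncard_image_of_injective _ (Equiv.injective _),
      Set.ncard_diff hsub, ← Nat.card_coe_set_eq, ← Nat.card_coe_set_eq,
      hCfull_card, hCgood_card, hAtot, hBf, hsplit, ← Nat.sub_mul, Nat.mul_comm]
  show sInf _ ≤ _
  exact Nat.sInf_le ⟨S, hScard, hdis⟩
end
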